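/- arXiv:1005.5648 — 4 statements merged into one kernel-verified Lean document; each statement's English description precedes it below -/
import Mathlib

section
/- Let (A, λ) be a semantic labeling over Σ, α : V → A an assignment, and σ : V → T(Σ,V) a substitution. Then for all terms t, lab_α(σ(t)) = (lab_α ∘ σ applied as a substitution to) lab_{[σ]_α}(t); that is, labeling a substituted term equals applying the labeled substitution to the term labeled under the interpreted assignment. -/
namespace TRSStmt

/-- First-order terms over a signature `F` with arity function `ar` and variables `V`. -/
inductive Tm (F : Type) (ar : F → ℕ) (V : Type) : Type
  | var : V → Tm F ar V
  | app : (f : F) → (Fin (ar f) → Tm F ar V) → Tm F ar V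

variable {F : Type} {ar : F → ℕ} {V W A : Type}

/-- Interpretation of a term in a `Σ`-algebra, given an assignment. -/
def Tm.eval (I : (f : F) → (Fin (ar f) → A) → A) (α : V → A) : Tm F ar V → A
  | .var x => α x
  | .app f ts => I f (fun i => (ts i).eval I α)

/-- Homomorphic extension of a substitution. -/
def Tm.subst (σ : V → Tm F ar W) : Tm F ar V → Tm F ar W
  | .var x => σ x
  | .app f ts => .app f (fun i => (ts i).subst σ)

/-- A variable occurs in a term. -/
def Tm.occurs (x : V) : Tm F ar V → Prop
  | .var y => y = x
  | .app _ ts => ∃ i, (ts i).occurs x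

/-- Subterm at a position (0-indexed). -/
def Tm.subAt : Tm F ar V → List ℕ → Option (Tm F ar V)
  | t, [] => some t
  | .var _, _ :: _ => none
  | .app f ts, i :: p => if h : i < ar f then (ts ⟨i, h⟩).subAt p else none

/-- Replace the subterm at a position. -/
def Tm.replaceAt : Tm F ar V → List ℕ → Tm F ar V → Option (Tm F ar V)
  | _, [], s => some s
  | .var _, _ :: _, _ => none
  | .app f ts, i :: p, s =>
      if h : i < ar f then
        ((ts ⟨i, h⟩).replaceAt p s).map (fun u => .app f (Function.update ts ⟨i, h⟩ u))
      else none

/-- The root symbol of a term (if any). -/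
def Tm.rootSym : Tm F ar V → Option F
  | .var _ => none
  | .app f _ => some f

/-- The function symbol at a position. -/
def Tm.symAt (t : Tm F ar V) (p : List ℕ) : Option F := (t.subAt p).bind Tm.rootSym

/-- A rewrite rule is a pair of terms. -/
abbrev Rule (F : Type) (ar : F → ℕ) (V : Type) := Tm F ar V × Tm F ar V

/-- A set of rules is a TRS: left-hand sides are no variables and
    right-hand side variables occur on the left. -/
def IsTRS (R : Set (Rule F ar V)) : Prop :=
  ∀ lr ∈ R, (∀ x : V, lr.1 ≠ Tm.var x) ∧ ∀ x : V, lr.2.occurs x → lr.1.occurs x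

/-- `t` is a redex with respect to `R`. -/
def IsRedex (R : Set (Rule F ar V)) (t : Tm F ar W) : Prop :=
  ∃ lr ∈ R, ∃ σ : V → Tm F ar W, t = lr.1.subst σ

/-- Rewrite step at position `p`. -/
def RewAt (R : Set (Rule F ar V)) (p : List ℕ) (t u : Tm F ar W) : Prop :=
  ∃ lr ∈ R, ∃ σ : V → Tm F ar W,
    t.subAt p = some (lr.1.subst σ) ∧ t.replaceAt p (lr.2.subst σ) = some u

/-- Outermost rewrite step at position `p`: no redex strictly above `p`. -/
def OutAt (R : Set (Rule F ar V)) (p : List ℕ) (t u : Tm F ar W) : Prop :=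
  RewAt R p t u ∧
    ∀ q, q <+: p → q ≠ p → ∀ s, t.subAt q = some s → ¬ IsRedex R s

/-- Outermost rewrite step. -/
def OStep (R : Set (Rule F ar V)) (t u : Tm F ar W) : Prop := ∃ p, OutAt R p t u

/-- μ-replacing positions for a replacement map `μ`. -/
inductive MuPos (μ : (f : F) → Fin (ar f) → Prop) : Tm F ar V → List ℕ → Prop
  | nil (t : Tm F ar V) : MuPos μ t []
  | cons (f : F) (ts : Fin (ar f) → Tm F ar V) (i : Fin (ar f)) (p : List ℕ) :
      μ f i → MuPos μ (ts i) p → MuPos μ (Tm.app f ts) (i.val :: p)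

/-- Context-sensitive (μ-)rewrite step. -/
def MuStep (R : Set (Rule F ar V)) (μ : (f : F) → Fin (ar f) → Prop)
    (t u : Tm F ar W) : Prop :=
  ∃ p, RewAt R p t u ∧ MuPos μ t p

/-- No infinite sequence for a relation (termination / strong normalization). -/
def NoInf {τ : Type _} (r : τ → τ → Prop) : Prop :=
  ¬ ∃ g : ℕ → τ, ∀ n, r (g n) (g (n + 1))

/-- One-hole contexts. -/
inductive Ctx (F : Type) (ar : F → ℕ) (V : Type) : Type
  | hole : Ctx F ar V
  | app : (f : F) → (i : Fin (ar f)) → ((j : Fin (ar f)) → j ≠ i → Tm F ar V) →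
      Ctx F ar V → Ctx F ar V

/-- Depth of the hole of a context. -/
def Ctx.depth : Ctx F ar V → ℕ
  | .hole => 0
  | .app _ _ _ C => C.depth + 1

/-- Filling the hole of a context with a term. -/
def Ctx.fill : Ctx F ar V → Tm F ar V → Tm F ar V
  | .hole, s => s
  | .app f i ts C, s => .app f (fun j => if h : j = i then C.fill s else ts j h)

/-- The rule `lr` preserves the interpretation inside every context of depth `n`. -/
def HoldsAtDepth (I : (f : F) → (Fin (ar f) → A) → A) (n : ℕ) (lr : Rule F ar V) : Prop :=
  ∀ (C : Ctx F ar V) (α : V → A), C.depth = n →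
    (C.fill lr.1).eval I α = (C.fill lr.2).eval I α

/-- `A` is a C-model for `R`. -/
def IsCModel (I : (f : F) → (Fin (ar f) → A) → A) (R : Set (Rule F ar V)) : Prop :=
  ∀ lr ∈ R, ∃ n, HoldsAtDepth I n lr

/-- `A` is a model for `R`. -/
def IsModel (I : (f : F) → (Fin (ar f) → A) → A) (R : Set (Rule F ar V)) : Prop :=
  ∀ lr ∈ R, ∀ α : V → A, lr.1.eval I α = lr.2.eval I α

section Label
variable {L : F → Type}

/-- Labeled signature: symbols with a label. -/
abbrev LSym (F : Type) (L : F → Type) := Σ f : F, L f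

/-- Arity on the labeled signature. -/
abbrev lar (ar : F → ℕ) : LSym F L → ℕ := fun g => ar g.1

/-- Semantic labeling of a term with respect to an assignment. -/
def labT (I : (f : F) → (Fin (ar f) → A) → A)
    (lf : ∀ f : F, (Fin (ar f) → A) → L f) (α : V → A) :
    Tm F ar V → Tm (LSym F L) (lar ar) V
  | .var x => .var x
  | .app f ts => .app ⟨f, lf f (fun i => (ts i).eval I α)⟩ (fun i => labT I lf α (ts i))

end Label

/-- Evaluation of ground terms. -/
def geval (I : (f : F) → (Fin (ar f) → A) → A) : Tm F ar Empty → A :=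
  Tm.eval I (fun x => x.elim)

/-- Labeling of ground terms. -/
def glab {L : F → Type} (I : (f : F) → (Fin (ar f) → A) → A)
    (lf : ∀ f : F, (Fin (ar f) → A) → L f) :
    Tm F ar Empty → Tm (LSym F L) (lar ar) Empty :=
  labT I lf (fun x => x.elim)

/-- Terms not containing the symbol `tp`. -/
def tpFree (tp : F) : Tm F ar V → Prop
  | .var _ => True
  | .app f ts => f ≠ tp ∧ ∀ i, tpFree tp (ts i)

/-- The term `top(s)`. -/
def topT (tp : F) (s : Tm F ar V) : Tm F ar V := Tm.app tp (fun _ => s)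

/-- Number of occurrences of a variable in a term. -/
def countV [DecidableEq V] (x : V) : Tm F ar V → ℕ
  | .var y => if y = x then 1 else 0
  | .app _ ts => ∑ i, countV x (ts i)

/-- Linear terms: every variable occurs at most once. -/
def Linear [DecidableEq V] (t : Tm F ar V) : Prop := ∀ x : V, countV x t ≤ 1

/-- Quasi-left-linear TRS. -/
def QuasiLeftLinear [DecidableEq V] (R : Set (Rule F ar V)) : Prop :=
  ∀ lr ∈ R, ¬ Linear lr.1 →
    ∃ lr' ∈ R, Linear lr'.1 ∧ ∃ σ : V → Tm F ar V, lr.1 = lr'.1.subst σ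

end TRSStmt

/-! Substitution commutes with evaluation, `[σ(t)]_α = [t]_{[σ]_α}`, so every label computed inside
`σ(t)` under `α` is the label computed at the same symbol of `t` under `[σ]_α`. -/

namespace TRSStmt

variable {F : Type} {ar : F → ℕ} {V W A : Type}

theorem Tm.eval_subst (I : (f : F) → (Fin (ar f) → A) → A) (α : W → A)
    (σ : V → Tm F ar W) (t : Tm F ar V) :
    (t.subst σ).eval I α = t.eval I (fun x => (σ x).eval I α) := by
  induction t with
  | var x => rfl
  | app f ts ih => simp only [Tm.subst, Tm.eval, ih]

theorem labT_subst {L : F → Type} (I : (f : F) → (Fin (ar f) → A) → A)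
    (lf : ∀ f : F, (Fin (ar f) → A) → L f) (α : W → A) (σ : V → Tm F ar W) (t : Tm F ar V) :
    labT I lf α (t.subst σ) =
      (labT I lf (fun x => (σ x).eval I α) t).subst (fun x => labT I lf α (σ x)) := by
  induction t with
  | var x => rfl
  | app f ts ih => simp [Tm.subst, labT, ih, Tm.eval_subst]

end TRSStmt

namespace Stmt

open TRSStmt

theorem lab_subst_general {F : Type} {ar : F → ℕ} {V A : Type} {L : F → Type}
    (I : (f : F) → (Fin (ar f) → A) → A)
    (lf : ∀ f : F, (Fin (ar f) → A) → L f)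
    (α : V → A) (σ : V → Tm F ar V) (t : Tm F ar V) :
    labT I lf α (t.subst σ) =
      (labT I lf (fun x => (σ x).eval I α) t).subst (fun x => labT I lf α (σ x)) :=
  labT_subst I lf α σ t

/-- Lemma 3.6: `lab_α(σ(t)) = lab_α(σ)(lab_{[σ]_α}(t))`. -/
theorem lab_subst {F : Type} {ar : F → ℕ} {V A : Type} {L : F → Type}
    (I : (f : F) → (Fin (ar f) → A) → A)
    (lf : ∀ f : F, (Fin (ar f) → A) → L f)
    (hLfin : ∀ f : F, Finite (L f)) (hLne : ∀ f : F, Nonempty (L f))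
    (α : V → A) (σ : V → Tm F ar V) (t : Tm F ar V) :
    labT I lf α (t.subst σ) =
      (labT I lf (fun x => (σ x).eval I α) t).subst (fun x => labT I lf α (σ x)) :=
  lab_subst_general I lf α σ t

end Stmt
end

section
/- Let R be a TRS over Σ, (A, λ, Σ_red) a sound C-labeling for R, and s, t ground terms with s outermost-rewriting to t at position p. Then for all proper prefixes q of the position 1·p, the symbol of the labeled term lab(top(s)) at position q is not in Σ_red. -/
namespace TRSStmt

variable {F : Type} {ar : F → ℕ} {V A : Type} {L : F → Type}

/-- Soundness of a C-labeling `(A, λ, Σ_red)` (with top symbol `tp`):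
    a ground `tp`-free term whose labeled root is a redex symbol is a redex. -/
def SoundLab (I : (f : F) → (Fin (ar f) → A) → A)
    (lf : ∀ f : F, (Fin (ar f) → A) → L f) (tp : F)
    (R : Set (Rule F ar V)) (Sred : Set (LSym F L)) : Prop :=
  ∀ t : Tm F ar Empty, tpFree tp t →
    ∀ g ∈ Sred, (glab I lf t).rootSym = some g → IsRedex R t

/-- Completeness of a C-labeling: every ground `tp`-free redex has its
    labeled root in `Σ_red`. -/
def CompleteLab (I : (f : F) → (Fin (ar f) → A) → A)
    (lf : ∀ f : F, (Fin (ar f) → A) → L f) (tp : F)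
    (R : Set (Rule F ar V)) (Sred : Set (LSym F L)) : Prop :=
  ∀ t : Tm F ar Empty, tpFree tp t → IsRedex R t →
    ∃ g ∈ Sred, (glab I lf t).rootSym = some g

/-- A core algebra (relative to the `tp`-free signature `Σ`):
    every element is the interpretation of a ground term over `Σ`. -/
def CoreAlg (I : (f : F) → (Fin (ar f) → A) → A) (tp : F) : Prop :=
  ∀ a : A, ∃ t : Tm F ar Empty, tpFree tp t ∧ geval I t = a

/-- Prepending the flat context `f(x₁,…,□ at i,…,xₙ)` to a term. -/
def flatExt (f : F) (i : Fin (ar f)) (xs : ∀ j : Fin (ar f), j ≠ i → V)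
    (t : Tm F ar V) : Tm F ar V :=
  Tm.app f (fun j => if h : j = i then t else Tm.var (xs j h))

/-- The iterated flat-context extension of rule–assignment pairs
    underlying the dynamic context extension `CE(A,λ,R)`. -/
inductive Reach (I : (f : F) → (Fin (ar f) → A) → A)
    (lf : ∀ f : F, (Fin (ar f) → A) → L f)
    (R : Set (Rule F ar V)) (Sred : Set (LSym F L)) :
    Tm F ar V → Tm F ar V → (V → A) → Prop
  | base (l r : Tm F ar V) (α : V → A) : (l, r) ∈ R → Reach I lf R Sred l r α
  | step (l r : Tm F ar V) (α : V → A) (f : F) (i : Fin (ar f))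
      (xs : ∀ j : Fin (ar f), j ≠ i → V) (α' : V → A) :
      Reach I lf R Sred l r α →
      (l.eval I α ≠ r.eval I α ∨ ∃ x, r = Tm.var x) →
      (∀ j h, ¬ l.occurs (xs j h)) →
      (∀ j h j' h', xs j h = xs j' h' → j = j') →
      (∀ x : V, l.occurs x → α' x = α x) →
      (∀ g ∈ Sred, (labT I lf α' (flatExt f i xs l)).rootSym ≠ some g) →
      Reach I lf R Sred (flatExt f i xs l) (flatExt f i xs r) α'

/-- The rules of the dynamic context extension `CE(A,λ,R)`:
    labelings of the fully extended rule–assignment pairs. -/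
def CE (I : (f : F) → (Fin (ar f) → A) → A)
    (lf : ∀ f : F, (Fin (ar f) → A) → L f)
    (R : Set (Rule F ar V)) (Sred : Set (LSym F L)) :
    Set (Rule (LSym F L) (lar ar) V) :=
  { p | ∃ (l r : Tm F ar V) (α : V → A),
      Reach I lf R Sred l r α ∧ l.eval I α = r.eval I α ∧ (∀ x : V, r ≠ Tm.var x) ∧
      p = (labT I lf α l, labT I lf α r) }

/-- The replacement map of the transformed system:
    all arguments of redex symbols are frozen. -/
def ceMu (Sred : Set (LSym F L)) : (g : LSym F L) → Fin (lar ar g) → Prop :=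
  fun g _ => g ∉ Sred

/-- Outermost ground termination of `R` over the `tp`-free signature `Σ`. -/
def OGTtp (R : Set (Rule F ar V)) (tp : F) : Prop :=
  ¬ ∃ g : ℕ → Tm F ar Empty,
      (∀ n, tpFree tp (g n)) ∧ ∀ n, OStep R (g n) (g (n + 1))

end TRSStmt

/-! Positions are 0-indexed, so the paper's `1·p` is `0 :: p`. Below `top(s)` the labeled term
is `lab(s)`, so a redex symbol at a position `0·q` strictly above `0·p` would, by soundness, make `s|_q` a redex strictly above `p`, which an outermost step
forbids; the root itself carries the label of `top`, which is not a redex symbol. -/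

namespace TRSStmt

variable {F : Type} {ar : F → ℕ} {V A : Type} {L : F → Type}

theorem subAt_labT (I : (f : F) → (Fin (ar f) → A) → A)
    (lf : ∀ f : F, (Fin (ar f) → A) → L f) (α : V → A) :
    ∀ (t : Tm F ar V) (q : List ℕ),
      (labT I lf α t).subAt q = (t.subAt q).map (labT I lf α)
  | _, [] => by simp only [Tm.subAt, Option.map_some]
  | .var _, _ :: _ => rfl
  | .app f ts, i :: q => by
      simp only [labT, Tm.subAt]
      split_ifs with h
      · exact subAt_labT I lf α (ts ⟨i, h⟩) q
      · rfl

theorem tpFree.subAt {tp : F} :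
    ∀ {t u : Tm F ar V} {q : List ℕ}, tpFree tp t → t.subAt q = some u → tpFree tp u
  | _, _, [], ht, hu => by
      rw [Tm.subAt, Option.some_inj] at hu
      exact hu ▸ ht
  | .var _, _, _ :: _, _, hu => nomatch hu
  | .app f ts, _, i :: q, ht, hu => by
      simp only [Tm.subAt] at hu
      split_ifs at hu with hi
      exact tpFree.subAt (ht.2 ⟨i, hi⟩) hu

theorem subAt_topT_cons {tp : F} (htp : 0 < ar tp) (s : Tm F ar V) (q : List ℕ) :
    (topT tp s).subAt (0 :: q) = s.subAt q := by
  simp only [topT, Tm.subAt, dif_pos htp]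

theorem symAt_labT_topT_cons (I : (f : F) → (Fin (ar f) → A) → A)
    (lf : ∀ f : F, (Fin (ar f) → A) → L f) (α : V → A) {tp : F} (htp : 0 < ar tp)
    (s : Tm F ar V) (q : List ℕ) :
    (labT I lf α (topT tp s)).symAt (0 :: q) = (labT I lf α s).symAt q := by
  rw [Tm.symAt, Tm.symAt, subAt_labT, subAt_labT, subAt_topT_cons htp]

theorem SoundLab.isRedex_subAt {I : (f : F) → (Fin (ar f) → A) → A}
    {lf : ∀ f : F, (Fin (ar f) → A) → L f} {tp : F} {R : Set (Rule F ar V)}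
    {Sred : Set (LSym F L)} (hsound : SoundLab I lf tp R Sred)
    {s : Tm F ar Empty} (hs : tpFree tp s) {q : List ℕ} {g : LSym F L} (hg : g ∈ Sred)
    (hsym : (glab I lf s).symAt q = some g) :
    ∃ u, s.subAt q = some u ∧ IsRedex R u := by
  rw [glab, Tm.symAt, subAt_labT] at hsym
  simp only [Option.bind_eq_some_iff, Option.map_eq_some_iff] at hsym
  obtain ⟨_, ⟨u, hu, rfl⟩, hroot⟩ := hsym
  exact ⟨u, hu, hsound u (hs.subAt hu) g hg hroot⟩

end TRSStmt

namespace Stmt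

open TRSStmt

theorem no_redex_symbol_above_general {F : Type} {ar : F → ℕ} {V A : Type} {L : F → Type}
    (I : (f : F) → (Fin (ar f) → A) → A)
    (lf : ∀ f : F, (Fin (ar f) → A) → L f)
    (tp : F) (htp : ar tp = 1)
    (R : Set (Rule F ar V))
    (Sred : Set (LSym F L)) (hSred : ∀ g ∈ Sred, g.1 ≠ tp)
    (hsound : SoundLab I lf tp R Sred)
    (s t : Tm F ar Empty) (hs : tpFree tp s)
    (p : List ℕ) (hstep : OutAt R p s t) :
    ∀ q : List ℕ, q <+: (0 :: p) → q ≠ 0 :: p →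
      ∀ g ∈ Sred, (glab I lf (topT tp s)).symAt q ≠ some g := by
  intro q hpre hne g hg hsym
  rcases List.prefix_cons_iff.1 hpre with rfl | ⟨q, rfl, hq⟩
  · cases hsym
    exact hSred _ hg rfl
  · rw [glab, symAt_labT_topT_cons I lf _ (by omega)] at hsym
    obtain ⟨u, hu, hred⟩ := hsound.isRedex_subAt hs hg hsym
    exact hstep.2 q hq (fun h => hne (h ▸ rfl)) u hu hred

/-- Lemma 5.6: for an outermost step `s →_{R,p} t` on ground terms and a
    sound C-labeling, no symbol of `lab(top(s))` strictly above the position `0·p`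
    (the copy of `p` inside `top(s)`) is a redex symbol. -/
theorem no_redex_symbol_above {F : Type} {ar : F → ℕ} {V A : Type} {L : F → Type}
    (I : (f : F) → (Fin (ar f) → A) → A)
    (lf : ∀ f : F, (Fin (ar f) → A) → L f)
    (tp : F) (htp : ar tp = 1)
    (htpconst : ∀ as as' : Fin (ar tp) → A, I tp as = I tp as')
    (R : Set (Rule F ar V)) (hTRS : IsTRS R) (hfin : R.Finite)
    (hRtp : ∀ lr ∈ R, tpFree tp lr.1 ∧ tpFree tp lr.2)
    (hcmodel : IsCModel I R)
    (Sred : Set (LSym F L)) (hSred : ∀ g ∈ Sred, g.1 ≠ tp)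
    (hsound : SoundLab I lf tp R Sred)
    (s t : Tm F ar Empty) (hs : tpFree tp s) (ht : tpFree tp t)
    (p : List ℕ) (hstep : OutAt R p s t) :
    ∀ q : List ℕ, q <+: (0 :: p) → q ≠ 0 :: p →
      ∀ g ∈ Sred, (glab I lf (topT tp s)).symAt q ≠ some g :=
  no_redex_symbol_above_general I lf tp htp R Sred hSred hsound s t hs p hstep

end Stmt
end

section
/- Let (R, μ) be a terminating many-sorted context-sensitive TRS. If the context-sensitive TRS obtained from (R, μ) by dropping sorts admits an infinite rewrite sequence, then (R, μ) is both collapsing and duplicating. -/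
namespace Stmt

open TRSStmt

/-- Well-sortedness of terms over a many-sorted signature (output sorts `outS`,
    input sorts `inS`, variable sorts `sv`). -/
inductive WS {F : Type} {ar : F → ℕ} {V S : Type}
    (outS : F → S) (inS : ∀ f : F, Fin (ar f) → S) (sv : V → S) :
    Tm F ar V → S → Prop
  | var (x : V) : WS outS inS sv (Tm.var x) (sv x)
  | app (f : F) (ts : Fin (ar f) → Tm F ar V) :
      (∀ i, WS outS inS sv (ts i) (inS f i)) →
      WS outS inS sv (Tm.app f ts) (outS f)

/-!
Ohlebusch's layer argument. Relative to an expected sort, a term splits into its cap, the maximal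
well-sorted top layer, and the multiset of its aliens, the maximal subterms hanging below that
layer, which have strictly smaller layer rank. A rewrite step either takes a well-sorted step in
the cap, or rewrites inside one alien, or, with a collapsing rule only, lets an alien surface and
dissolve into its own aliens. By induction on the rank all aliens are terminating, and the pair
(cap, aliens) decreases lexicographically for sorted termination and the multiset extension of
the alien order: cap first if no rule collapses, aliens first if no rule duplicates, since then
a cap step does not add aliens.
-/

open Relation Function

theorem Multiset.sum_bind {ι α β : Type*} (s : Finset ι) (g : ι → Multiset α)
    (h : α → Multiset β) : (∑ i ∈ s, g i).bind h = ∑ i ∈ s, (g i).bind h :=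
  map_sum (Multiset.sumAddMonoidHom.comp (Multiset.mapAddMonoidHom h)) g s

theorem sum_apply_update {ι M : Type*} [Fintype ι] [DecidableEq ι] [AddCommMonoid M]
    {α : ι → Type*} (g : ∀ i, α i → M) (ts : ∀ i, α i) (j : ι) (w : α j) :
    ∑ i, g i (update ts j w i) = g j w + ∑ i ∈ Finset.univ.erase j, g i (ts i) := by
  rw [← Finset.add_sum_erase _ _ (Finset.mem_univ j), update_self]
  exact congrArg _ <| Finset.sum_congr rfl fun i hi => by
    rw [update_of_ne (Finset.ne_of_mem_erase hi)]

theorem transGen_cutExpand_add {α : Type*} {r : α → α → Prop} (W : Multiset α)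
    {X Y : Multiset α} {x₀ : α} (hx₀ : x₀ ∈ X) (hY : ∀ y ∈ Y, r y x₀) :
    TransGen (CutExpand r) (W + Y) (W + X) := by
  obtain ⟨X', rfl⟩ := Multiset.exists_cons_of_mem hx₀
  have hdrop : ∀ Z : Multiset α, ReflTransGen (CutExpand r) (W + Y) (W + Y + Z) := by
    intro Z
    induction Z using Multiset.induction with
    | empty => rw [add_zero]
    | cons z Z ih =>
      refine ih.tail ⟨0, z, by simp, ?_⟩
      rw [← Multiset.singleton_add, add_zero]
      abel
  refine TransGen.trans_right (hdrop X') (.single ⟨Y, x₀, hY, ?_⟩)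
  rw [← Multiset.singleton_add]
  abel

theorem acc_of_map_rel {α β : Type*} {r : α → α → Prop} {ρ : β → β → Prop}
    (hρ : WellFounded ρ) (φ : α → β) {P : α → Prop}
    (hP : ∀ ⦃a b⦄, r b a → P a → P b) (hφ : ∀ ⦃a b⦄, r b a → P a → ρ (φ b) (φ a))
    {a : α} (ha : P a) : Acc r a := by
  have hacc := InvImage.accessible φ (hρ.apply (φ a))
  revert ha
  induction hacc with
  | intro a _ ih => exact fun ha => ⟨a, fun b hb => ih b (hφ hb ha) (hP hb ha)⟩

section Rewriting

variable {F : Type} {ar : F → ℕ} {V W : Type} {R : Set (Rule F ar V)}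
  {μ : (f : F) → Fin (ar f) → Prop}

theorem _root_.TRSStmt.MuStep.root {l r : Tm F ar V} (hlr : (l, r) ∈ R) (σ : V → Tm F ar W) :
    MuStep R μ (l.subst σ) (r.subst σ) :=
  ⟨[], ⟨(l, r), hlr, σ, by simp [Tm.subAt], by simp [Tm.replaceAt]⟩, .nil _⟩

theorem _root_.TRSStmt.MuStep.arg {f : F} {ts : Fin (ar f) → Tm F ar W} {j : Fin (ar f)}
    {w : Tm F ar W} (hj : μ f j) (h : MuStep R μ (ts j) w) :
    MuStep R μ (.app f ts) (.app f (update ts j w)) := by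
  obtain ⟨p, ⟨lr, hlr, σ, hl, hr⟩, hp⟩ := h
  refine ⟨j.val :: p, ⟨lr, hlr, σ, ?_, ?_⟩, .cons f ts j p hj hp⟩
  · simpa [Tm.subAt] using hl
  · simp [Tm.replaceAt, hr]

theorem _root_.TRSStmt.MuStep.induction_on
    {motive : ∀ t u : Tm F ar W, MuStep R μ t u → Prop} {t u : Tm F ar W} (h : MuStep R μ t u)
    (root : ∀ l r (σ : V → Tm F ar W) (hlr : (l, r) ∈ R), motive _ _ (.root hlr σ))
    (arg : ∀ f (ts : Fin (ar f) → Tm F ar W) j w (hj : μ f j) (h : MuStep R μ (ts j) w),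
      motive _ _ h → motive _ _ (.arg hj h)) :
    motive t u h := by
  obtain ⟨p, hrw, hp⟩ := h
  induction hp generalizing u with
  | nil t =>
    obtain ⟨⟨l, r⟩, hlr, σ, hl, hr⟩ := hrw
    obtain rfl : t = l.subst σ := by simpa [Tm.subAt] using hl
    obtain rfl : r.subst σ = u := by simpa [Tm.replaceAt] using hr
    exact root l r σ hlr
  | cons f ts j p hj hp ih =>
    obtain ⟨lr, hlr, σ, hl, hr⟩ := hrw
    simp only [Tm.subAt, Tm.replaceAt, j.isLt, dif_pos, Fin.eta] at hl hr
    obtain ⟨w, hw, rfl⟩ := Option.map_eq_some_iff.1 hr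
    have hstep : RewAt R p (ts j) w := ⟨lr, hlr, σ, hl, hw⟩
    exact arg f ts j w hj ⟨p, hstep, hp⟩ (ih hstep)

def varOccs : Tm F ar V → Multiset V
  | .var x => {x}
  | .app _ ts => ∑ i, varOccs (ts i)

theorem mem_varOccs {x : V} : ∀ {t : Tm F ar V}, x ∈ varOccs t ↔ t.occurs x
  | .var y => by simp [varOccs, Tm.occurs, eq_comm]
  | .app f ts => by simp [varOccs, Tm.occurs, Multiset.mem_sum, mem_varOccs]

theorem count_varOccs [DecidableEq V] (x : V) :
    ∀ t : Tm F ar V, (varOccs t).count x = countV x t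
  | .var y => by simp [varOccs, countV, Multiset.count_singleton, eq_comm]
  | .app f ts => by simp [varOccs, countV, Multiset.count_sum', count_varOccs]

def IsCollapsing (R : Set (Rule F ar V)) : Prop := ∃ lr ∈ R, ∃ x : V, lr.2 = Tm.var x

def NonDuplicating (R : Set (Rule F ar V)) : Prop := ∀ lr ∈ R, varOccs lr.2 ≤ varOccs lr.1

theorem nonDuplicating_of_not_exists_countV_lt [DecidableEq V]
    (h : ¬ ∃ lr ∈ R, ∃ x : V, countV x lr.1 < countV x lr.2) : NonDuplicating R := by
  push Not at h
  exact fun lr hlr => Multiset.le_iff_count.2 fun x => by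
    simpa only [count_varOccs] using h lr hlr x

end Rewriting

structure Sorting (F : Type) (ar : F → ℕ) (V S : Type) where
  outS : F → S
  inS : ∀ f : F, Fin (ar f) → S
  sv : V → S

namespace Sorting

section Layers

variable {F : Type} {ar : F → ℕ} {V S : Type} (Γ : Sorting F ar V S)

abbrev WellSorted (t : Tm F ar V) (s : S) : Prop := WS Γ.outS Γ.inS Γ.sv t s

def SortInhabited (s : S) : Prop := ∃ u, Γ.WellSorted u s

def ArgsInhabited (f : F) : Prop := ∀ i, Γ.SortInhabited (Γ.inS f i)

/-- `t` can be the root of a well-sorted layer of sort `s`. -/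
def Fits (s : S) : Tm F ar V → Prop
  | .var x => Γ.sv x = s
  | .app f _ => Γ.ArgsInhabited f ∧ Γ.outS f = s

open Classical in
noncomputable def aliens : Tm F ar V → Multiset (Tm F ar V)
  | .var _ => 0
  | .app f ts =>
    if Γ.ArgsInhabited f then
      ∑ i, if Γ.Fits (Γ.inS f i) (ts i) then aliens (ts i) else {ts i}
    else ∑ i, {ts i}

open Classical in
noncomputable def rank : Tm F ar V → ℕ
  | .var _ => 0
  | .app f ts =>
    (Finset.univ.sup fun i => rank (ts i) + if Γ.Fits (Γ.inS f i) (ts i) then 0 else 1) +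
      if Γ.ArgsInhabited f then 0 else 1

open Classical in
noncomputable def aliensAt (s : S) (t : Tm F ar V) : Multiset (Tm F ar V) :=
  if Γ.Fits s t then Γ.aliens t else {t}

open Classical in
noncomputable def rankAt (s : S) (t : Tm F ar V) : ℕ :=
  Γ.rank t + if Γ.Fits s t then 0 else 1

variable [Nonempty (Tm F ar V)]

/-- Junk unless `s` is inhabited. -/
noncomputable def witness (s : S) : Tm F ar V :=
  Classical.epsilon fun u => Γ.WellSorted u s

open Classical in
noncomputable def cap : Tm F ar V → Tm F ar V
  | .var x => .var x
  | .app f ts =>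
    if Γ.ArgsInhabited f then
      .app f fun i => if Γ.Fits (Γ.inS f i) (ts i) then cap (ts i) else Γ.witness (Γ.inS f i)
    -- junk, but independent of `ts`, so that steps below `f` leave the cap alone
    else Γ.witness (Γ.outS f)

open Classical in
noncomputable def capAt (s : S) (t : Tm F ar V) : Tm F ar V :=
  if Γ.Fits s t then Γ.cap t else Γ.witness s

end Layers

section LayerLemmas

variable {F : Type} {ar : F → ℕ} {V S : Type} {Γ : Sorting F ar V S}

theorem WellSorted.fits {t : Tm F ar V} {s : S} (h : Γ.WellSorted t s) : Γ.Fits s t := by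
  cases h with
  | var x => rfl
  | app f ts hts => exact ⟨fun i => ⟨ts i, hts i⟩, rfl⟩

theorem Fits.eq {t : Tm F ar V} {s s' : S} (h : Γ.Fits s t) (h' : Γ.Fits s' t) : s = s' := by
  cases t with
  | var x => exact h.symm.trans h'
  | app f ts => exact h.2.symm.trans h'.2

theorem fits_app {f : F} (hf : Γ.ArgsInhabited f) (ts : Fin (ar f) → Tm F ar V) :
    Γ.Fits (Γ.outS f) (.app f ts) :=
  ⟨hf, rfl⟩

theorem fits_app_update {s : S} {f : F} {ts : Fin (ar f) → Tm F ar V} {j : Fin (ar f)}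
    {w : Tm F ar V} : Γ.Fits s (.app f (update ts j w)) ↔ Γ.Fits s (.app f ts) :=
  Iff.rfl

theorem fits_subst_iff {s : S} {f : F} {ls : Fin (ar f) → Tm F ar V} {σ : V → Tm F ar V} :
    Γ.Fits s ((Tm.app f ls).subst σ) ↔ Γ.Fits s (.app f ls) :=
  Iff.rfl

theorem aliens_app {f : F} (hf : Γ.ArgsInhabited f) (ts : Fin (ar f) → Tm F ar V) :
    Γ.aliens (.app f ts) = ∑ i, Γ.aliensAt (Γ.inS f i) (ts i) := by
  simp only [aliens, if_pos hf, aliensAt]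

theorem aliens_app_of_not {f : F} (hf : ¬ Γ.ArgsInhabited f) (ts : Fin (ar f) → Tm F ar V) :
    Γ.aliens (.app f ts) = ∑ i, {ts i} := by
  simp only [aliens, if_neg hf]

theorem rank_app {f : F} (hf : Γ.ArgsInhabited f) (ts : Fin (ar f) → Tm F ar V) :
    Γ.rank (.app f ts) = Finset.univ.sup fun i => Γ.rankAt (Γ.inS f i) (ts i) := by
  simp only [rank, if_pos hf, rankAt, add_zero]

theorem rank_app_of_not {f : F} (hf : ¬ Γ.ArgsInhabited f) (ts : Fin (ar f) → Tm F ar V) :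
    Γ.rank (.app f ts) = (Finset.univ.sup fun i => Γ.rankAt (Γ.inS f i) (ts i)) + 1 := by
  simp only [rank, if_neg hf, rankAt]

theorem aliensAt_of_fits {s : S} {t : Tm F ar V} (h : Γ.Fits s t) :
    Γ.aliensAt s t = Γ.aliens t :=
  if_pos h

theorem aliensAt_of_not_fits {s : S} {t : Tm F ar V} (h : ¬ Γ.Fits s t) :
    Γ.aliensAt s t = {t} :=
  if_neg h

theorem rankAt_of_fits {s : S} {t : Tm F ar V} (h : Γ.Fits s t) : Γ.rankAt s t = Γ.rank t := by
  simp [rankAt, h]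

theorem rankAt_of_not_fits {s : S} {t : Tm F ar V} (h : ¬ Γ.Fits s t) :
    Γ.rankAt s t = Γ.rank t + 1 := by
  simp [rankAt, h]

theorem rank_le_rankAt (s : S) (t : Tm F ar V) : Γ.rank t ≤ Γ.rankAt s t :=
  Nat.le_add_right _ _

theorem rankAt_le_rank_add_one (s : S) (t : Tm F ar V) : Γ.rankAt s t ≤ Γ.rank t + 1 := by
  unfold rankAt
  split <;> omega

theorem rank_lt_of_mem_aliens : ∀ {t a : Tm F ar V}, a ∈ Γ.aliens t → Γ.rank a < Γ.rank t
  | .var _, a, h => absurd h (Multiset.notMem_zero a)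
  | .app f ts, a, h => by
    have hle : ∀ i, Γ.rankAt (Γ.inS f i) (ts i) ≤
        Finset.univ.sup fun i => Γ.rankAt (Γ.inS f i) (ts i) :=
      fun i => Finset.le_sup (f := fun i => Γ.rankAt (Γ.inS f i) (ts i)) (Finset.mem_univ i)
    by_cases hf : Γ.ArgsInhabited f
    · rw [aliens_app hf, Multiset.mem_sum] at h
      obtain ⟨i, -, hi⟩ := h
      refine lt_of_lt_of_le ?_ ((hle i).trans_eq (rank_app hf ts).symm)
      by_cases hfit : Γ.Fits (Γ.inS f i) (ts i)
      · rw [aliensAt_of_fits hfit] at hi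
        rw [rankAt_of_fits hfit]
        exact rank_lt_of_mem_aliens hi
      · rw [aliensAt_of_not_fits hfit, Multiset.mem_singleton] at hi
        rw [rankAt_of_not_fits hfit, hi]
        exact Nat.lt_succ_self _
    · rw [aliens_app_of_not hf, Multiset.mem_sum] at h
      obtain ⟨i, -, hi⟩ := h
      rw [Multiset.mem_singleton.1 hi, rank_app_of_not hf, Nat.lt_succ_iff]
      exact (rank_le_rankAt _ _).trans (hle i)

theorem aliensAt_subst (σ : V → Tm F ar V) {t : Tm F ar V} {s : S} (h : Γ.WellSorted t s) :
    Γ.aliensAt s (t.subst σ) = (varOccs t).bind fun x => Γ.aliensAt (Γ.sv x) (σ x) := by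
  induction h with
  | var x => simp [varOccs, Tm.subst]
  | app f ts hts ih =>
    have hf : Γ.ArgsInhabited f := fun i => ⟨ts i, hts i⟩
    rw [Tm.subst, aliensAt_of_fits (fits_app hf _), aliens_app hf, varOccs, Multiset.sum_bind]
    exact Finset.sum_congr rfl fun i _ => ih i

theorem rankAt_subst_le_iff (σ : V → Tm F ar V) {t : Tm F ar V} {s : S}
    (h : Γ.WellSorted t s) {B : ℕ} :
    Γ.rankAt s (t.subst σ) ≤ B ↔ ∀ x, t.occurs x → Γ.rankAt (Γ.sv x) (σ x) ≤ B := by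
  induction h with
  | var x => simp [Tm.subst, Tm.occurs]
  | app f ts hts ih =>
    have hf : Γ.ArgsInhabited f := fun i => ⟨ts i, hts i⟩
    rw [Tm.subst, rankAt_of_fits (fits_app hf _), rank_app hf, Finset.sup_le_iff]
    simp only [Finset.mem_univ, true_implies, ih, Tm.occurs]
    exact ⟨fun H x ⟨i, hi⟩ => H i x hi, fun H i x hi => H x ⟨i, hi⟩⟩

variable [Nonempty (Tm F ar V)]

theorem witness_wellSorted {s : S} (hs : Γ.SortInhabited s) : Γ.WellSorted (Γ.witness s) s :=
  Classical.epsilon_spec hs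

theorem cap_app {f : F} (hf : Γ.ArgsInhabited f) (ts : Fin (ar f) → Tm F ar V) :
    Γ.cap (.app f ts) = .app f fun i => Γ.capAt (Γ.inS f i) (ts i) := by
  simp only [cap, if_pos hf, capAt]

theorem cap_app_of_not {f : F} (hf : ¬ Γ.ArgsInhabited f) (ts : Fin (ar f) → Tm F ar V) :
    Γ.cap (.app f ts) = Γ.witness (Γ.outS f) := by
  simp only [cap, if_neg hf]

theorem capAt_of_fits {s : S} {t : Tm F ar V} (h : Γ.Fits s t) : Γ.capAt s t = Γ.cap t :=
  if_pos h

theorem capAt_of_not_fits {s : S} {t : Tm F ar V} (h : ¬ Γ.Fits s t) :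
    Γ.capAt s t = Γ.witness s :=
  if_neg h

theorem cap_wellSorted : ∀ {t : Tm F ar V} {s : S}, Γ.Fits s t → Γ.WellSorted (Γ.cap t) s
  | .var x, _, rfl => .var x
  | .app f ts, _, ⟨hf, rfl⟩ => by
    rw [cap_app hf]
    refine .app f _ fun i => ?_
    by_cases hi : Γ.Fits (Γ.inS f i) (ts i)
    · rw [capAt_of_fits hi]
      exact cap_wellSorted hi
    · rw [capAt_of_not_fits hi]
      exact witness_wellSorted (hf i)

theorem capAt_wellSorted {s : S} (hs : Γ.SortInhabited s) (t : Tm F ar V) :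
    Γ.WellSorted (Γ.capAt s t) s := by
  by_cases h : Γ.Fits s t
  · rw [capAt_of_fits h]
    exact cap_wellSorted h
  · rw [capAt_of_not_fits h]
    exact witness_wellSorted hs

theorem capAt_subst (σ : V → Tm F ar V) {t : Tm F ar V} {s : S} (h : Γ.WellSorted t s) :
    Γ.capAt s (t.subst σ) = t.subst fun x => Γ.capAt (Γ.sv x) (σ x) := by
  induction h with
  | var x => rfl
  | app f ts hts ih =>
    have hf : Γ.ArgsInhabited f := fun i => ⟨ts i, hts i⟩
    rw [Tm.subst, capAt_of_fits (fits_app hf _), cap_app hf, Tm.subst]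
    exact congrArg _ (funext ih)

end LayerLemmas

section Steps

variable {F : Type} {ar : F → ℕ} {V S : Type} (Γ : Sorting F ar V S) (R : Set (Rule F ar V))
  (μ : (f : F) → Fin (ar f) → Prop)

def WellSortedRules : Prop := ∀ lr ∈ R, ∃ s, Γ.WellSorted lr.1 s ∧ Γ.WellSorted lr.2 s

def SortedStep (c c' : Tm F ar V) : Prop :=
  (∃ s, Γ.WellSorted c s) ∧ (∃ s, Γ.WellSorted c' s) ∧ MuStep R μ c c'

def AlienSucc (x y : Tm F ar V) : Prop :=
  MuStep R μ x y ∨ y ∈ Γ.aliens x ∨ ∃ z, MuStep R μ x z ∧ y ∈ Γ.aliens z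

inductive CapAlienStep (c : Tm F ar V) (A : Multiset (Tm F ar V)) (c' : Tm F ar V)
    (A' : Multiset (Tm F ar V)) : Prop
  | cap : Γ.SortedStep R μ c c' → (NonDuplicating R → A' ≤ A) → CapAlienStep c A c' A'
  | aliens (W X Y : Multiset (Tm F ar V)) (x₀ : Tm F ar V) : c' = c ∨ IsCollapsing R →
      A = W + X → A' = W + Y → x₀ ∈ X → (∀ y ∈ Y, Γ.AlienSucc R μ x₀ y) →
      CapAlienStep c A c' A'

variable {Γ R μ}

theorem exists_sort_of_mem (hR : IsTRS R) (hRΓ : Γ.WellSortedRules R) {l r : Tm F ar V}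
    (hlr : (l, r) ∈ R) :
    ∃ s₀, Γ.WellSorted l s₀ ∧ Γ.WellSorted r s₀ ∧
      ∀ σ : V → Tm F ar V, Γ.Fits s₀ (l.subst σ) := by
  obtain ⟨s₀, hl, hr⟩ := hRΓ _ hlr
  refine ⟨s₀, hl, hr, fun σ => ?_⟩
  cases l with
  | var x => exact absurd rfl ((hR _ hlr).1 x)
  | app f ls => exact fits_subst_iff.2 hl.fits

theorem CapAlienStep.app {f : F} {cs : Fin (ar f) → Tm F ar V} {j : Fin (ar f)}
    {c' : Tm F ar V} {A A' : Multiset (Tm F ar V)} (B : Multiset (Tm F ar V)) (hj : μ f j)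
    (hcs : ∀ i, Γ.WellSorted (cs i) (Γ.inS f i)) (hc' : Γ.WellSorted c' (Γ.inS f j))
    (h : Γ.CapAlienStep R μ (cs j) A c' A') :
    Γ.CapAlienStep R μ (.app f cs) (A + B) (.app f (update cs j c')) (A' + B) := by
  cases h with
  | cap hstep hdup =>
    refine .cap ⟨⟨_, .app f cs hcs⟩, ⟨_, .app f _ fun i => ?_⟩, .arg hj hstep.2.2⟩
      fun hnd => add_le_add (hdup hnd) le_rfl
    rcases eq_or_ne i j with rfl | hi
    · simpa using hc'
    · simpa [update_of_ne hi] using hcs i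
  | aliens W X Y x₀ hc hA hA' hx₀ hY =>
    refine .aliens (W + B) X Y x₀ ?_ (by rw [hA, add_right_comm]) (by rw [hA', add_right_comm])
      hx₀ hY
    rcases hc with rfl | hc
    · exact .inl (by rw [update_eq_self])
    · exact .inr hc

theorem rankAt_root_le (hR : IsTRS R) (hRΓ : Γ.WellSortedRules R) {l r : Tm F ar V}
    (hlr : (l, r) ∈ R) (σ : V → Tm F ar V) (s : S) :
    Γ.rankAt s (r.subst σ) ≤ Γ.rankAt s (l.subst σ) := by
  obtain ⟨s₀, hl, hr, hfit⟩ := exists_sort_of_mem hR hRΓ hlr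
  have key : Γ.rankAt s₀ (r.subst σ) ≤ Γ.rankAt s₀ (l.subst σ) :=
    (rankAt_subst_le_iff σ hr).2 fun x hx =>
      (rankAt_subst_le_iff σ hl).1 le_rfl x ((hR _ hlr).2 x hx)
  by_cases hs : Γ.Fits s (l.subst σ)
  · rwa [hs.eq (hfit σ)]
  · rw [rankAt_of_not_fits hs, ← rankAt_of_fits (hfit σ)]
    exact (rankAt_le_rank_add_one _ _).trans
      (Nat.add_le_add_right ((rank_le_rankAt s₀ _).trans key) 1)

theorem rank_app_update_le {f : F} {ts : Fin (ar f) → Tm F ar V} {j : Fin (ar f)}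
    {w : Tm F ar V} (h : ∀ s, Γ.rankAt s w ≤ Γ.rankAt s (ts j)) :
    Γ.rank (.app f (update ts j w)) ≤ Γ.rank (.app f ts) := by
  have hsup : (Finset.univ.sup fun i => Γ.rankAt (Γ.inS f i) (update ts j w i)) ≤
      Finset.univ.sup fun i => Γ.rankAt (Γ.inS f i) (ts i) :=
    Finset.sup_mono_fun fun i _ => by
      rcases eq_or_ne i j with rfl | hi
      · simpa using h _
      · simp [update_of_ne hi]
  by_cases hf : Γ.ArgsInhabited f
  · rwa [rank_app hf, rank_app hf]
  · rw [rank_app_of_not hf, rank_app_of_not hf]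
    exact Nat.add_le_add_right hsup 1

theorem rankAt_le_of_muStep (hR : IsTRS R) (hRΓ : Γ.WellSortedRules R) {t u : Tm F ar V}
    (h : MuStep R μ t u) (s : S) : Γ.rankAt s u ≤ Γ.rankAt s t := by
  induction h using MuStep.induction_on generalizing s with
  | root l r σ hlr => exact rankAt_root_le hR hRΓ hlr σ s
  | arg f ts j w hj hstep ih =>
    unfold rankAt
    rw [fits_app_update]
    exact Nat.add_le_add_right (rank_app_update_le ih) _

theorem rank_le_of_muStep (hR : IsTRS R) (hRΓ : Γ.WellSortedRules R) {t u : Tm F ar V}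
    (h : MuStep R μ t u) : Γ.rank u ≤ Γ.rank t := by
  induction h using MuStep.induction_on with
  | root l r σ hlr =>
    obtain ⟨s₀, -, -, hfit⟩ := exists_sort_of_mem hR hRΓ hlr
    calc Γ.rank (r.subst σ) ≤ Γ.rankAt s₀ (r.subst σ) := rank_le_rankAt _ _
      _ ≤ Γ.rankAt s₀ (l.subst σ) := rankAt_root_le hR hRΓ hlr σ s₀
      _ = Γ.rank (l.subst σ) := rankAt_of_fits (hfit σ)
  | arg f ts j w hj hstep _ => exact rank_app_update_le (rankAt_le_of_muStep hR hRΓ hstep)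

variable [Nonempty (Tm F ar V)]

theorem capAlienStep_of_not_fits {s : S} {t u : Tm F ar V} (ht : ¬ Γ.Fits s t)
    (hu : ¬ Γ.Fits s u) (h : MuStep R μ t u) :
    Γ.CapAlienStep R μ (Γ.capAt s t) (Γ.aliensAt s t) (Γ.capAt s u) (Γ.aliensAt s u) := by
  rw [capAt_of_not_fits ht, capAt_of_not_fits hu, aliensAt_of_not_fits ht,
    aliensAt_of_not_fits hu]
  exact .aliens 0 {t} {u} t (.inl rfl) (zero_add _).symm (zero_add _).symm
    (Multiset.mem_singleton_self t) fun y hy => .inl (Multiset.mem_singleton.1 hy ▸ h)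

theorem capAlienStep_capAt (hR : IsTRS R) (hRΓ : Γ.WellSortedRules R) {t u : Tm F ar V}
    (h : MuStep R μ t u) {s : S} (hs : Γ.SortInhabited s) :
    Γ.CapAlienStep R μ (Γ.capAt s t) (Γ.aliensAt s t) (Γ.capAt s u) (Γ.aliensAt s u) := by
  induction h using MuStep.induction_on generalizing s with
  | root l r σ hlr =>
    obtain ⟨s₀, hl, hr, hfit⟩ := exists_sort_of_mem hR hRΓ hlr
    by_cases ht : Γ.Fits s (l.subst σ)
    · obtain rfl : s = s₀ := ht.eq (hfit σ)
      refine .cap ⟨⟨s, capAt_wellSorted hs _⟩, ⟨s, capAt_wellSorted hs _⟩, ?_⟩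
        fun hnd => ?_
      · rw [capAt_subst σ hl, capAt_subst σ hr]
        exact .root hlr _
      · obtain ⟨C, hC⟩ := Multiset.le_iff_exists_add.1 (hnd _ hlr)
        rw [aliensAt_subst σ hl, aliensAt_subst σ hr, hC, Multiset.add_bind]
        exact le_add_right le_rfl
    by_cases hu : Γ.Fits s (r.subst σ)
    · have hcol : IsCollapsing R := by
        cases r with
        | var x => exact ⟨_, hlr, x, rfl⟩
        | app f rs => exact absurd (hfit σ) ((fits_subst_iff.1 hu).eq hr.fits ▸ ht)
      refine .aliens 0 {l.subst σ} _ (l.subst σ) (.inr hcol)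
        (by rw [aliensAt_of_not_fits ht, zero_add]) (zero_add _).symm
        (Multiset.mem_singleton_self _) fun y hy => ?_
      rw [aliensAt_of_fits hu] at hy
      exact .inr (.inr ⟨_, .root hlr σ, hy⟩)
    · exact capAlienStep_of_not_fits ht hu (.root hlr σ)
  | arg f ts j w hj hstep ih =>
    by_cases ht : Γ.Fits s (.app f ts)
    · obtain ⟨hf, rfl⟩ := ht
      rw [capAt_of_fits (fits_app hf _), capAt_of_fits (fits_app hf _), cap_app hf, cap_app hf,
        aliensAt_of_fits (fits_app hf _), aliensAt_of_fits (fits_app hf _), aliens_app hf,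
        aliens_app hf, sum_apply_update (fun i => Γ.aliensAt (Γ.inS f i)),
        ← Finset.add_sum_erase _ _ (Finset.mem_univ j)]
      simp only [apply_update (fun i => Γ.capAt (Γ.inS f i))]
      exact (ih (hf j)).app _ hj (fun i => capAt_wellSorted (hf i) _) (capAt_wellSorted (hf j) _)
    · exact capAlienStep_of_not_fits ht (fits_app_update.not.2 ht) (.arg hj hstep)

theorem capAlienStep_of_fits (hR : IsTRS R) (hRΓ : Γ.WellSortedRules R) {t u : Tm F ar V}
    (h : MuStep R μ t u) {s : S} (ht : Γ.Fits s t) (hu : Γ.Fits s u) :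
    Γ.CapAlienStep R μ (Γ.cap t) (Γ.aliens t) (Γ.cap u) (Γ.aliens u) := by
  have := capAlienStep_capAt hR hRΓ h ⟨_, cap_wellSorted ht⟩
  rwa [capAt_of_fits ht, capAt_of_fits hu, aliensAt_of_fits ht, aliensAt_of_fits hu] at this

theorem capAlienStep_cap (hR : IsTRS R) (hRΓ : Γ.WellSortedRules R) {t u : Tm F ar V}
    (h : MuStep R μ t u) :
    Γ.CapAlienStep R μ (Γ.cap t) (Γ.aliens t) (Γ.cap u) (Γ.aliens u) := by
  induction h using MuStep.induction_on with
  | root l r σ hlr =>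
    obtain ⟨s₀, hl, hr, hfit⟩ := exists_sort_of_mem hR hRΓ hlr
    by_cases hu : Γ.Fits s₀ (r.subst σ)
    · exact capAlienStep_of_fits hR hRΓ (.root hlr σ) (hfit σ) hu
    cases r with
    | app f rs => exact absurd (fits_subst_iff.2 hr.fits) hu
    | var x =>
      obtain rfl : s₀ = Γ.sv x := by cases hr; rfl
      -- the collapse exposes `σ x`, an alien of `l.subst σ`, and leaves its own aliens behind
      have hmem : σ x ∈ Γ.aliens (l.subst σ) := by
        rw [← aliensAt_of_fits (hfit σ), aliensAt_subst σ hl]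
        exact Multiset.mem_bind.2 ⟨x, mem_varOccs.2 ((hR _ hlr).2 x rfl),
          by rw [aliensAt_of_not_fits (t := σ x) hu]; exact Multiset.mem_singleton_self _⟩
      exact .aliens 0 _ _ (σ x) (.inr ⟨_, hlr, x, rfl⟩) (zero_add _).symm (zero_add _).symm
        hmem fun y hy => .inr (.inl hy)
  | arg f ts j w hj hstep _ =>
    by_cases hf : Γ.ArgsInhabited f
    · exact capAlienStep_of_fits hR hRΓ (.arg hj hstep) (fits_app hf _) (fits_app hf _)
    rw [cap_app_of_not hf, cap_app_of_not hf, aliens_app_of_not hf, aliens_app_of_not hf,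
      sum_apply_update (fun _ c => ({c} : Multiset (Tm F ar V))),
      ← Finset.add_sum_erase _ _ (Finset.mem_univ j)]
    exact .aliens _ {ts j} {w} (ts j) (.inl rfl) (add_comm _ _) (add_comm _ _)
      (Multiset.mem_singleton_self _) fun y hy => .inl (Multiset.mem_singleton.1 hy ▸ hstep)

end Steps

section Termination

variable {F : Type} {ar : F → ℕ} {V S : Type} (Γ : Sorting F ar V S) (R : Set (Rule F ar V))
  (μ : (f : F) → Fin (ar f) → Prop)

def SortedTerminating : Prop :=
  ¬ ∃ g : ℕ → Tm F ar V,
    (∀ n, ∃ s, Γ.WellSorted (g n) s) ∧ ∀ n, MuStep R μ (g n) (g (n + 1))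

def AlienLT (k : ℕ) (y x : Tm F ar V) : Prop := Γ.AlienSucc R μ x y ∧ Γ.rank x < k

variable {Γ R μ}

theorem wellFounded_sortedStep (h : Γ.SortedTerminating R μ) :
    WellFounded fun c' c => Γ.SortedStep R μ c c' :=
  wellFounded_iff_isEmpty_descending_chain.2
    ⟨fun ⟨g, hg⟩ => h ⟨g, fun n => (hg n).1, fun n => (hg n).2.2⟩⟩

theorem wellFounded_alienLT (hR : IsTRS R) (hRΓ : Γ.WellSortedRules R) {k : ℕ}
    (hk : ∀ t, Γ.rank t < k → Acc (fun y x => MuStep R μ x y) t) :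
    WellFounded (Γ.AlienLT R μ k) := by
  suffices ∀ n x, Γ.rank x ≤ n → Acc (Γ.AlienLT R μ k) x from
    ⟨fun x => this _ x le_rfl⟩
  intro n
  induction n using Nat.strong_induction_on with
  | _ n ihn =>
    intro x hxn
    by_cases hxk : Γ.rank x < k
    swap
    · exact ⟨x, fun y hy => absurd hy.2 hxk⟩
    have hacc := hk x hxk
    clear hxk
    induction hacc with
    | intro z _ ihz =>
      refine ⟨z, fun y ⟨hy, _⟩ => ?_⟩
      rcases hy with hstep | hal | ⟨w, hw, hal⟩
      · exact ihz y hstep ((rank_le_of_muStep hR hRΓ hstep).trans hxn)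
      · exact ihn _ ((rank_lt_of_mem_aliens hal).trans_le hxn) y le_rfl
      · exact ihn _ ((rank_lt_of_mem_aliens hal).trans_le
          ((rank_le_of_muStep hR hRΓ hw).trans hxn)) y le_rfl

variable [Nonempty (Tm F ar V)]

theorem acc_of_rank_le (hR : IsTRS R) (hRΓ : Γ.WellSortedRules R)
    (hsorted : Γ.SortedTerminating R μ) (hside : ¬ IsCollapsing R ∨ NonDuplicating R) {k : ℕ}
    (hk : ∀ t, Γ.rank t < k → Acc (fun y x => MuStep R μ x y) t) {t : Tm F ar V}
    (ht : Γ.rank t ≤ k) : Acc (fun y x => MuStep R μ x y) t := by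
  have hwfAliens := (wellFounded_alienLT hR hRΓ hk).cutExpand.transGen
  have hwfCap := wellFounded_sortedStep hsorted
  have aliens_lt : ∀ {t : Tm F ar V} {W X Y x₀}, Γ.rank t ≤ k → Γ.aliens t = W + X →
      x₀ ∈ X → (∀ y ∈ Y, Γ.AlienSucc R μ x₀ y) →
      TransGen (CutExpand (Γ.AlienLT R μ k)) (W + Y) (Γ.aliens t) :=
    fun hb hX hx₀ hY => hX ▸ transGen_cutExpand_add _ hx₀ fun y hy =>
      ⟨hY y hy, (rank_lt_of_mem_aliens (hX ▸ Multiset.mem_add.2 (.inr hx₀))).trans_le hb⟩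
  have hrank : ∀ ⦃a b : Tm F ar V⦄, MuStep R μ a b → Γ.rank a ≤ k → Γ.rank b ≤ k :=
    fun a b hab ha => (rank_le_of_muStep hR hRΓ hab).trans ha
  rcases hside with hnc | hnd
  · refine acc_of_map_rel (hwfCap.prod_lex hwfAliens) (fun t => (Γ.cap t, Γ.aliens t)) hrank
      (fun a b hab ha => ?_) ht
    rcases capAlienStep_cap hR hRΓ hab with
      ⟨hs, -⟩ | ⟨W, X, Y, x₀, hc, hX, hY', hx₀, hY⟩
    · exact .left _ _ hs
    · rw [hc.resolve_right hnc, hY']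
      exact .right _ (aliens_lt ha hX hx₀ hY)
  · refine acc_of_map_rel (hwfAliens.prod_lex hwfCap) (fun t => (Γ.aliens t, Γ.cap t)) hrank
      (fun a b hab ha => ?_) ht
    rcases capAlienStep_cap hR hRΓ hab with
      ⟨hs, hle⟩ | ⟨W, X, Y, x₀, -, hX, hY', hx₀, hY⟩
    · rcases (hle hnd).eq_or_lt with heq | hlt
      · rw [heq]
        exact .right _ hs
      obtain ⟨D, hD⟩ := Multiset.le_iff_exists_add.1 hlt.le
      obtain ⟨d, hd⟩ := Multiset.exists_mem_of_ne_zero fun h0 : D = 0 =>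
        hlt.ne (by rw [hD, h0, add_zero])
      exact .left _ _ (add_zero (Γ.aliens b) ▸ aliens_lt (Y := 0) ha hD hd (by simp))
    · rw [hY']
      exact .left _ _ (aliens_lt ha hX hx₀ hY)

theorem acc_muStep (hR : IsTRS R) (hRΓ : Γ.WellSortedRules R)
    (hsorted : Γ.SortedTerminating R μ) (hside : ¬ IsCollapsing R ∨ NonDuplicating R)
    (t : Tm F ar V) : Acc (fun y x => MuStep R μ x y) t := by
  suffices ∀ k t, Γ.rank t ≤ k → Acc (fun y x => MuStep R μ x y) t from this _ t le_rfl
  intro k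
  induction k using Nat.strong_induction_on with
  | _ k ih => exact fun t => acc_of_rank_le hR hRΓ hsorted hside fun t' ht' => ih _ ht' t' le_rfl

end Termination

end Sorting

theorem dropping_sorts_general {F : Type} {ar : F → ℕ} {V S : Type} [DecidableEq V]
    (outS : F → S) (inS : ∀ f : F, Fin (ar f) → S) (sv : V → S)
    (R : Set (Rule F ar V)) (hTRS : IsTRS R)
    (μ : (f : F) → Fin (ar f) → Prop)
    (hWSrules : ∀ lr ∈ R, ∃ s : S, WS outS inS sv lr.1 s ∧ WS outS inS sv lr.2 s)
    (hsortedSN : ¬ ∃ g : ℕ → Tm F ar V,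
        (∀ n, ∃ s : S, WS outS inS sv (g n) s) ∧
        ∀ n, MuStep R μ (g n) (g (n + 1)))
    (hinf : ∃ g : ℕ → Tm F ar V, ∀ n, MuStep R μ (g n) (g (n + 1))) :
    (∃ lr ∈ R, ∃ x : V, lr.2 = Tm.var x) ∧
    (∃ lr ∈ R, ∃ x : V, countV x lr.1 < countV x lr.2) := by
  obtain ⟨g, hg⟩ := hinf
  have : Nonempty (Tm F ar V) := ⟨g 0⟩
  have hnotSN : ¬ Acc (fun y x => MuStep R μ x y) (g 0) :=
    not_acc_iff_exists_descending_chain.2 ⟨g, rfl, hg⟩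
  have hSN := Sorting.acc_muStep (Γ := ⟨outS, inS, sv⟩) hTRS hWSrules hsortedSN
  exact ⟨by_contra fun hc => hnotSN (hSN (.inl hc) _),
    by_contra fun hd => hnotSN (hSN (.inr (nonDuplicating_of_not_exists_countV_lt hd)) _)⟩

/-- Theorem 5.13, adapted from Ohlebusch: if the many-sorted
    context-sensitive TRS `(R, μ)` is terminating (on well-sorted terms), but the
    context-sensitive TRS obtained by dropping the sorts admits an infinite rewrite
    sequence, then `R` is collapsing and duplicating. -/
theorem dropping_sorts {F : Type} {ar : F → ℕ} {V S : Type} [DecidableEq V]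
    (outS : F → S) (inS : ∀ f : F, Fin (ar f) → S) (sv : V → S)
    (R : Set (Rule F ar V)) (hTRS : IsTRS R) (hfin : R.Finite)
    (μ : (f : F) → Fin (ar f) → Prop)
    (hWSrules : ∀ lr ∈ R, ∃ s : S, WS outS inS sv lr.1 s ∧ WS outS inS sv lr.2 s)
    (hsortedSN : ¬ ∃ g : ℕ → Tm F ar V,
        (∀ n, ∃ s : S, WS outS inS sv (g n) s) ∧
        ∀ n, MuStep R μ (g n) (g (n + 1)))
    (hinf : ∃ g : ℕ → Tm F ar V, ∀ n, MuStep R μ (g n) (g (n + 1))) :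
    (∃ lr ∈ R, ∃ x : V, lr.2 = Tm.var x) ∧
    (∃ lr ∈ R, ∃ x : V, countV x lr.1 < countV x lr.2) :=
  dropping_sorts_general outS inS sv R hTRS μ hWSrules hsortedSN hinf

end Stmt
end

section
/- A TRS R over Σ is outermost terminating if R over the extended signature Σ ∪ {s, 0} (s a fresh unary symbol, 0 a fresh constant) is outermost ground terminating. Moreover, if R is quasi-left-linear, the converse also holds. -/
namespace Stmt

open TRSStmt

/-- The signature extended with a fresh unary symbol `s` (`Sum.inr true`)
    and a fresh constant `0` (`Sum.inr false`). -/
abbrev arExt {F : Type} (ar : F → ℕ) : F ⊕ Bool → ℕ :=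
  Sum.elim ar (fun b => cond b 1 0)

/-- Inclusion of terms over `Σ` into terms over `Σ ∪ {s, 0}`. -/
def liftTm {F : Type} {ar : F → ℕ} {V : Type} :
    TRSStmt.Tm F ar V → TRSStmt.Tm (F ⊕ Bool) (arExt ar) V
  | .var x => .var x
  | .app f ts => .app (Sum.inl f) (fun i => liftTm (ts i))

/-- The TRS `R` viewed over the extended signature. -/
def liftTRS {F : Type} {ar : F → ℕ} {V : Type} (R : Set (Rule F ar V)) :
    Set (Rule (F ⊕ Bool) (arExt ar) V) :=
  { p | ∃ lr ∈ R, p = (liftTm lr.1, liftTm lr.2) }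

end Stmt

/-!
Encoding each variable `x` injectively as a numeral `s^(φ x)(0)` turns an infinite outermost
reduction of open terms into one of ground terms: `s` and `0` occur in no rule, so redexes of the
encoded term are exactly the encodings of redexes.

Conversely, call the maximal subterms rooted in `s` or `0` aliens, and abstract every alien to one
fixed variable. Steps outside the aliens survive this abstraction as outermost steps, because by
quasi-left-linearity a redex of the abstracted term comes from a redex of a linear left-hand side,
which also matches the original term. If infinitely many steps are of this kind we are done.
Otherwise, from some point on all steps happen inside aliens; then the aliens stay at fixed
positions and one of them is rewritten infinitely often below its root `s`. That gives an infinite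
outermost reduction of smaller alien depth, and we conclude by induction on the alien depth.
-/

theorem exists_enum_of_frequently {α : Type*} {P : ℕ → Prop} {f : ℕ → α}
    (hP : ∃ᶠ n in Filter.atTop, P n) (hf : ∀ n, ¬ P n → f (n + 1) = f n) :
    ∃ e : ℕ → ℕ, ∀ k, P (e k) ∧ f (e k + 1) = f (e (k + 1)) := by
  have hinf := Nat.frequently_atTop_iff_infinite.1 hP
  refine ⟨Nat.nth P, fun k => ⟨Nat.nth_mem_of_infinite hinf k, ?_⟩⟩
  have hgap : ∀ m, Nat.nth P k + 1 ≤ m → m ≤ Nat.nth P (k + 1) → f m = f (Nat.nth P k + 1) := by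
    intro m hm
    induction m, hm using Nat.le_induction with
    | base => exact fun _ => rfl
    | succ m hm ih =>
      intro hle
      have hPm : ¬ P m := fun hPm => by
        have := Nat.le_nth_of_lt_nth_succ (p := P) (k := k) (by omega) hPm
        omega
      rw [hf m hPm, ih (by omega)]
  exact (hgap _ (Nat.nth_strictMono hinf k.lt_succ_self) le_rfl).symm

namespace TRSStmt

variable {F : Type} {ar : F → ℕ} {V W : Type}

namespace Tm

@[simp]
theorem subAt_nil (t : Tm F ar V) : t.subAt [] = some t := by
  cases t <;> rfl

@[simp]
theorem replaceAt_nil (t v : Tm F ar V) : t.replaceAt [] v = some v := by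
  cases t <;> rfl

theorem subAt_append (t : Tm F ar V) (p q : List ℕ) :
    t.subAt (p ++ q) = (t.subAt p).bind (·.subAt q) := by
  induction p generalizing t with
  | nil => simp
  | cons i p ih =>
    cases t with
    | var x => rfl
    | app f ts =>
      simp only [List.cons_append, subAt]
      split
      · exact ih _
      · rfl

theorem subAt_cons_eq_some {f : F} {ts : Fin (ar f) → Tm F ar V} {i : ℕ} {p : List ℕ}
    {v : Tm F ar V} :
    (app f ts).subAt (i :: p) = some v ↔ ∃ hi : i < ar f, (ts ⟨i, hi⟩).subAt p = some v := by
  rw [subAt]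
  split <;> simp [*]

theorem subAt_cons_eq_none {f : F} {ts : Fin (ar f) → Tm F ar V} {i : ℕ} {p : List ℕ} :
    (app f ts).subAt (i :: p) = none ↔ ∀ hi : i < ar f, (ts ⟨i, hi⟩).subAt p = none := by
  rw [subAt]
  split <;> simp [*]

theorem replaceAt_cons_eq_some {f : F} {ts : Fin (ar f) → Tm F ar V} {i : ℕ} {p : List ℕ}
    {v u : Tm F ar V} :
    (app f ts).replaceAt (i :: p) v = some u ↔ ∃ (hi : i < ar f) (u' : Tm F ar V),
      (ts ⟨i, hi⟩).replaceAt p v = some u' ∧ u = app f (Function.update ts ⟨i, hi⟩ u') := by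
  rw [replaceAt]
  split <;> simp [*, eq_comm]

theorem isSome_subAt_of_prefix {t : Tm F ar V} {p q : List ℕ} (hq : q <+: p)
    (h : (t.subAt p).isSome) : (t.subAt q).isSome := by
  obtain ⟨r, rfl⟩ := hq
  rw [subAt_append] at h
  cases hw : t.subAt q <;> simp_all

theorem replaceAt_append_eq_some {t u w v : Tm F ar V} {q p : List ℕ}
    (hw : t.subAt q = some w) (h : t.replaceAt (q ++ p) v = some u) :
    ∃ w', w.replaceAt p v = some w' ∧ u.subAt q = some w' := by
  induction q generalizing t u with
  | nil =>
    simp only [subAt_nil, Option.some.injEq] at hw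
    subst hw
    exact ⟨u, h, subAt_nil u⟩
  | cons i q ih =>
    cases t with
    | var x => simp [subAt] at hw
    | app f ts =>
      obtain ⟨hi, hw⟩ := subAt_cons_eq_some.1 hw
      obtain ⟨_, u', hu', rfl⟩ := replaceAt_cons_eq_some.1 h
      obtain ⟨w', hw', hu'w'⟩ := ih hw hu'
      exact ⟨w', hw', subAt_cons_eq_some.2 ⟨hi, by simpa using hu'w'⟩⟩

theorem subAt_replaceAt_of_not_prefix {t u v : Tm F ar V} {p r : List ℕ}
    (h : t.replaceAt p v = some u) (hpr : ¬ p <+: r) (hrp : ¬ r <+: p) :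
    u.subAt r = t.subAt r := by
  induction p generalizing t u r with
  | nil => exact absurd List.nil_prefix hpr
  | cons i p ih =>
    cases r with
    | nil => exact absurd List.nil_prefix hrp
    | cons j r =>
      cases t with
      | var x => simp [replaceAt] at h
      | app f ts =>
        obtain ⟨hi, u', hu', rfl⟩ := replaceAt_cons_eq_some.1 h
        simp only [subAt]
        split
        · rw [Function.update_apply]
          split_ifs with hji
          · obtain rfl : j = i := congrArg Fin.val hji
            exact ih hu' (fun h => hpr (List.cons_prefix_cons.2 ⟨rfl, h⟩))
              (fun h => hrp (List.cons_prefix_cons.2 ⟨rfl, h⟩))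
          · rfl
        · rfl

theorem eq_of_subAt_eq_var_of_prefix {t : Tm F ar V} {q₁ q₂ l : List ℕ} {x y : V}
    (h₁ : t.subAt q₁ = some (var x)) (h₂ : t.subAt q₂ = some (var y))
    (hq₁ : q₁ <+: l) (hq₂ : q₂ <+: l) : q₁ = q₂ := by
  have leaf : ∀ {a b : List ℕ} {x y : V}, t.subAt a = some (var x) →
      t.subAt b = some (var y) → a <+: b → a = b := by
    rintro a _ x y ha hb ⟨_ | ⟨j, r⟩, rfl⟩
    · simp
    · simp [subAt_append, ha, subAt] at hb
  rcases List.prefix_or_prefix_of_prefix hq₁ hq₂ with h | h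
  · exact leaf h₁ h₂ h
  · exact (leaf h₂ h₁ h).symm

theorem finite_setOf_isSome_subAt (t : Tm F ar V) : {p | (t.subAt p).isSome}.Finite := by
  induction t with
  | var x =>
    refine (Set.finite_singleton []).subset fun p hp => ?_
    cases p with
    | nil => rfl
    | cons i p => simp [subAt] at hp
  | app f ts ih =>
    refine ((Set.finite_iUnion fun i => (ih i).image (List.cons i.val)).insert []).subset
      fun p hp => ?_
    cases p with
    | nil => exact Set.mem_insert _ _
    | cons i p =>
      obtain ⟨v, hv⟩ := Option.isSome_iff_exists.1 hp
      obtain ⟨hi, hv⟩ := subAt_cons_eq_some.1 hv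
      exact Set.mem_insert_of_mem _ (Set.mem_iUnion.2 ⟨⟨i, hi⟩, p, by simp [hv], rfl⟩)

theorem subst_congr {t : Tm F ar V} {σ σ' : V → Tm F ar W}
    (h : ∀ x, t.occurs x → σ x = σ' x) : t.subst σ = t.subst σ' := by
  induction t with
  | var x => exact h x rfl
  | app f ts ih => exact congrArg (app f) (funext fun i => ih i fun x hx => h x ⟨i, hx⟩)

theorem subst_subst {U : Type} (t : Tm F ar V) (σ : V → Tm F ar W) (τ : W → Tm F ar U) :
    (t.subst σ).subst τ = t.subst fun x => (σ x).subst τ := by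
  induction t with
  | var x => rfl
  | app f ts ih => exact congrArg (app f) (funext ih)

end Tm

section Linear

variable [DecidableEq V]

theorem occurs_iff_countV_pos {x : V} {t : Tm F ar V} : t.occurs x ↔ 0 < countV x t := by
  induction t with
  | var y => by_cases h : y = x <;> simp [Tm.occurs, countV, h]
  | app f ts ih => simp [Tm.occurs, countV, ih, Finset.sum_pos_iff]

theorem Linear.of_app {f : F} {ts : Fin (ar f) → Tm F ar V} (h : Linear (Tm.app f ts))
    (i : Fin (ar f)) : Linear (ts i) := fun x =>
  (Finset.single_le_sum (f := fun j => countV x (ts j)) (by simp) (Finset.mem_univ i)).trans (h x)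

theorem Linear.eq_of_occurs {f : F} {ts : Fin (ar f) → Tm F ar V} (h : Linear (Tm.app f ts))
    {x : V} {i j : Fin (ar f)} (hi : (ts i).occurs x) (hj : (ts j).occurs x) : i = j := by
  by_contra hne
  have hpair := Finset.sum_le_sum_of_subset (f := fun k => countV x (ts k))
    (Finset.subset_univ {i, j})
  rw [Finset.sum_pair hne] at hpair
  have := h x
  simp only [countV] at this
  have := occurs_iff_countV_pos.1 hi
  have := occurs_iff_countV_pos.1 hj
  omega

theorem Linear.exists_forall_occurs {B : Type} [Nonempty B] {f : F}
    {ts : Fin (ar f) → Tm F ar V} (h : Linear (Tm.app f ts)) (σ : Fin (ar f) → V → B) :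
    ∃ τ : V → B, ∀ i x, (ts i).occurs x → τ x = σ i x := by
  classical
  refine ⟨fun x => if hx : ∃ i, (ts i).occurs x then σ hx.choose x
    else Classical.arbitrary B, fun i x hx => ?_⟩
  have hex : ∃ i, (ts i).occurs x := ⟨i, hx⟩
  dsimp only
  rw [dif_pos hex, h.eq_of_occurs hex.choose_spec hx]

end Linear

theorem RewAt.isSome_subAt {R : Set (Rule F ar V)} {p : List ℕ} {t u : Tm F ar W}
    (h : RewAt R p t u) : (t.subAt p).isSome := by
  obtain ⟨_, _, _, hsub, _⟩ := h
  simp [hsub]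

theorem OutAt.subterm {R : Set (Rule F ar V)} {q p : List ℕ} {t u w : Tm F ar W}
    (h : OutAt R (q ++ p) t u) (hw : t.subAt q = some w) :
    ∃ w', u.subAt q = some w' ∧ OutAt R p w w' := by
  obtain ⟨⟨lr, hlr, σ, hsub, hrep⟩, hout⟩ := h
  obtain ⟨w', hrep', hw'⟩ := Tm.replaceAt_append_eq_some hw hrep
  refine ⟨w', hw', ⟨lr, hlr, σ, by simpa [Tm.subAt_append, hw] using hsub, hrep'⟩, ?_⟩
  intro r hr hne s hs
  exact hout (q ++ r) ((List.prefix_append_right_inj q).2 hr) (by simpa using hne) s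
    (by simpa [Tm.subAt_append, hw] using hs)

theorem exists_chain_of_frequently_below {R : Set (Rule F ar V)} {g : ℕ → Tm F ar W}
    {p : ℕ → List ℕ} {q : List ℕ} (hp : ∀ n, OutAt R (p n) (g n) (g (n + 1)))
    (hbelow : ∃ᶠ n in Filter.atTop, q <+: p n)
    (hstay : ∀ n, ¬ q <+: p n → (g (n + 1)).subAt q = (g n).subAt q) :
    ∃ g' : ℕ → Tm F ar W, (∀ n, OStep R (g' n) (g' (n + 1))) ∧
      ∃ m, (g m).subAt q = some (g' 0) := by
  obtain ⟨e, he⟩ := exists_enum_of_frequently (f := fun n => (g n).subAt q) hbelow hstay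
  have hstep : ∀ k, ∃ v w, (g (e k)).subAt q = some v ∧ (g (e k + 1)).subAt q = some w ∧
      OStep R v w := by
    intro k
    obtain ⟨r, hr⟩ := (he k).1
    obtain ⟨v, hv⟩ := Option.isSome_iff_exists.1
      (Tm.isSome_subAt_of_prefix (he k).1 (hp (e k)).1.isSome_subAt)
    obtain ⟨w, hw, hvw⟩ := (hr ▸ hp (e k)).subterm hv
    exact ⟨v, w, hv, hw, r, hvw⟩
  choose v w hv hw hvw using hstep
  refine ⟨v, fun k => ?_, e 0, hv 0⟩
  rw [← Option.some.inj ((hw k).symm.trans ((he k).2.trans (hv (k + 1))))]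
  exact hvw k

end TRSStmt

namespace Stmt

open TRSStmt Filter

variable {F : Type} {ar : F → ℕ} {V : Type}

abbrev GroundTm (F : Type) (ar : F → ℕ) := Tm (F ⊕ Bool) (arExt ar) Empty

def num : ℕ → GroundTm F ar
  | 0 => .app (.inr false) Fin.elim0
  | n + 1 => .app (.inr true) fun _ => num n

def numVal : GroundTm F ar → ℕ
  | .app (.inr true) ts => numVal (ts ⟨0, Nat.one_pos⟩) + 1
  | _ => 0

theorem numVal_num (n : ℕ) : numVal (num n : GroundTm F ar) = n := by
  induction n with
  | zero => rfl
  | succ n ih => exact congrArg (· + 1) ih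

def enc (φ : V → ℕ) : Tm F ar V → GroundTm F ar
  | .var x => num (φ x)
  | .app f ts => .app (.inl f) fun i => enc φ (ts i)

def cap (ν : GroundTm F ar → V) : GroundTm F ar → Tm F ar V
  | .var x => x.elim
  | .app (.inl f) ts => .app f fun i => cap ν (ts i)
  | .app (.inr b) ts => .var (ν (.app (.inr b) ts))

theorem liftTm_occurs_iff {l : Tm F ar V} {x : V} : (liftTm l).occurs x ↔ l.occurs x := by
  induction l with
  | var y => rfl
  | app f ts ih => exact exists_congr ih

theorem cap_liftTm_subst (ν : GroundTm F ar → V) (l : Tm F ar V) (σ : V → GroundTm F ar) :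
    cap ν ((liftTm l).subst σ) = l.subst fun x => cap ν (σ x) := by
  induction l with
  | var x => rfl
  | app f ts ih => exact congrArg (Tm.app f) (funext ih)

theorem isRedex_cap {R : Set (Rule F ar V)} (ν : GroundTm F ar → V) {s : GroundTm F ar}
    (h : IsRedex (liftTRS R) s) : IsRedex R (cap ν s) := by
  obtain ⟨_, ⟨lr, hlr, rfl⟩, σ, rfl⟩ := h
  exact ⟨lr, hlr, _, cap_liftTm_subst ν lr.1 σ⟩

section Encoding

variable {φ : V → ℕ}

theorem cap_num (ν : GroundTm F ar → V) (n : ℕ) : cap ν (num n) = .var (ν (num n)) := by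
  cases n <;> rfl

theorem cap_enc {ν : GroundTm F ar → V} (hν : ∀ x, ν (num (φ x)) = x) (t : Tm F ar V) :
    cap ν (enc φ t) = t := by
  induction t with
  | var x => exact (cap_num ν (φ x)).trans (congrArg Tm.var (hν x))
  | app f ts ih => exact congrArg (Tm.app f) (funext ih)

theorem enc_subst (t : Tm F ar V) (σ : V → Tm F ar V) :
    enc φ (t.subst σ) = (liftTm t).subst fun x => enc φ (σ x) := by
  induction t with
  | var x => rfl
  | app f ts ih => exact congrArg (Tm.app (Sum.inl f)) (funext ih)

theorem enc_subAt {t v : Tm F ar V} {p : List ℕ} (h : t.subAt p = some v) :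
    (enc φ t).subAt p = some (enc φ v) := by
  induction p generalizing t with
  | nil =>
    simp only [Tm.subAt_nil, Option.some.injEq] at h ⊢
    rw [h]
  | cons i p ih =>
    cases t with
    | var x => simp [Tm.subAt] at h
    | app f ts =>
      obtain ⟨hi, h⟩ := Tm.subAt_cons_eq_some.1 h
      exact Tm.subAt_cons_eq_some.2 ⟨hi, ih h⟩

theorem enc_replaceAt {t v u : Tm F ar V} {p : List ℕ} (h : t.replaceAt p v = some u) :
    (enc φ t).replaceAt p (enc φ v) = some (enc φ u) := by
  induction p generalizing t u with
  | nil =>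
    simp only [Tm.replaceAt_nil, Option.some.injEq] at h ⊢
    rw [h]
  | cons i p ih =>
    cases t with
    | var x => simp [Tm.replaceAt] at h
    | app f ts =>
      obtain ⟨hi, u', hu', rfl⟩ := Tm.replaceAt_cons_eq_some.1 h
      refine Tm.replaceAt_cons_eq_some.2 ⟨hi, enc φ u', ih hu', ?_⟩
      exact congrArg (Tm.app (Sum.inl f)) (funext (Function.apply_update (fun _ => enc φ) ts _ u'))

theorem outAt_enc {R : Set (Rule F ar V)} {ν : GroundTm F ar → V}
    (hν : ∀ x, ν (num (φ x)) = x) {p : List ℕ} {t u : Tm F ar V} (h : OutAt R p t u) :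
    OutAt (liftTRS R) p (enc φ t) (enc φ u) := by
  obtain ⟨⟨lr, hlr, σ, hsub, hrep⟩, hout⟩ := h
  refine ⟨⟨_, ⟨lr, hlr, rfl⟩, fun x => enc φ (σ x), ?_, ?_⟩, ?_⟩
  · rw [enc_subAt hsub, enc_subst]
  · rw [← enc_subst]
    exact enc_replaceAt hrep
  · intro q hq hne s hs hred
    obtain ⟨v, hv⟩ := Option.isSome_iff_exists.1
      (Tm.isSome_subAt_of_prefix (t := t) hq (by simp [hsub]))
    rw [enc_subAt hv, Option.some.injEq] at hs
    subst hs
    exact hout q hq hne v hv (cap_enc hν v ▸ isRedex_cap ν hred)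

end Encoding

theorem exists_ground_chain_of_open_chain [Countable V] [Infinite V] {R : Set (Rule F ar V)}
    {g : ℕ → Tm F ar V} (hg : ∀ n, OStep R (g n) (g (n + 1))) :
    ∃ g' : ℕ → GroundTm F ar, ∀ n, OStep (liftTRS R) (g' n) (g' (n + 1)) := by
  obtain ⟨φ⟩ : Nonempty (V ≃ ℕ) := nonempty_equiv_of_countable
  have hν : ∀ x, φ.symm (numVal (num (φ x) : GroundTm F ar)) = x := by simp [numVal_num]
  exact ⟨fun n => enc φ (g n), fun n => (hg n).imp fun _ => outAt_enc (ν := φ.symm ∘ numVal) hν⟩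

section Cap

variable {ν : GroundTm F ar → V}

theorem cap_subAt {t v : GroundTm F ar} {w : Tm F ar V} {p : List ℕ}
    (hw : (cap ν t).subAt p = some w) (hv : t.subAt p = some v) : w = cap ν v := by
  induction p generalizing t with
  | nil => simp_all
  | cons i p ih =>
    rcases t with ⟨⟨⟩⟩ | ⟨f | b, ts⟩
    · obtain ⟨_, hw⟩ := Tm.subAt_cons_eq_some.1 hw
      obtain ⟨_, hv⟩ := Tm.subAt_cons_eq_some.1 hv
      exact ih hw hv
    · simp [cap, Tm.subAt] at hw

theorem cap_replaceAt {t v u : GroundTm F ar} {p : List ℕ} (h : t.replaceAt p v = some u)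
    (hp : ((cap ν t).subAt p).isSome) : (cap ν t).replaceAt p (cap ν v) = some (cap ν u) := by
  induction p generalizing t u with
  | nil => simp_all
  | cons i p ih =>
    rcases t with ⟨⟨⟩⟩ | ⟨f | b, ts⟩
    · obtain ⟨hi, u', hu', rfl⟩ := Tm.replaceAt_cons_eq_some.1 h
      obtain ⟨w, hw⟩ := Option.isSome_iff_exists.1 hp
      obtain ⟨_, hw⟩ := Tm.subAt_cons_eq_some.1 hw
      refine Tm.replaceAt_cons_eq_some.2 ⟨hi, cap ν u', ih hu' (by simp [hw]), ?_⟩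
      exact congrArg (Tm.app f) (funext (Function.apply_update (fun _ => cap ν) ts _ u'))
    · simp [cap, Tm.subAt] at hp

theorem exists_liftTm_subst_of_cap_eq [DecidableEq V] {l : Tm F ar V} (hl : Linear l)
    {s : GroundTm F ar} {σ : V → Tm F ar V} (h : cap ν s = l.subst σ) :
    ∃ τ : V → GroundTm F ar, s = (liftTm l).subst τ := by
  induction l generalizing s with
  | var x => exact ⟨fun _ => s, rfl⟩
  | app f ts ih =>
    rcases s with ⟨⟨⟩⟩ | ⟨g | b, ss⟩
    · simp only [cap, Tm.subst, Tm.app.injEq] at h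
      obtain ⟨rfl, h⟩ := h
      choose τ hτ using fun i => ih i (hl.of_app i) (congrFun (eq_of_heq h) i)
      have : Nonempty (GroundTm F ar) := ⟨num 0⟩
      obtain ⟨τ', hτ'⟩ := hl.exists_forall_occurs τ
      refine ⟨τ', congrArg (Tm.app (Sum.inl g)) (funext fun i => ?_)⟩
      rw [hτ i]
      exact Tm.subst_congr fun x hx => (hτ' i x (liftTm_occurs_iff.1 hx)).symm
    · simp [cap, Tm.subst] at h

theorem isRedex_liftTRS_of_isRedex_cap [DecidableEq V] {R : Set (Rule F ar V)}
    (hQ : QuasiLeftLinear R) {s : GroundTm F ar} (h : IsRedex R (cap ν s)) :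
    IsRedex (liftTRS R) s := by
  obtain ⟨lr, hlr, σ, hs⟩ := h
  by_cases hlin : Linear lr.1
  · obtain ⟨τ, hτ⟩ := exists_liftTm_subst_of_cap_eq hlin hs
    exact ⟨_, ⟨lr, hlr, rfl⟩, τ, hτ⟩
  · obtain ⟨lr', hlr', hlin', ρ, hρ⟩ := hQ lr hlr hlin
    rw [hρ, Tm.subst_subst] at hs
    obtain ⟨τ, hτ⟩ := exists_liftTm_subst_of_cap_eq hlin' hs
    exact ⟨_, ⟨lr', hlr', rfl⟩, τ, hτ⟩

theorem outAt_cap [DecidableEq V] {R : Set (Rule F ar V)} (hQ : QuasiLeftLinear R)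
    {p : List ℕ} {t u : GroundTm F ar} (h : OutAt (liftTRS R) p t u)
    (hp : ((cap ν t).subAt p).isSome) : OutAt R p (cap ν t) (cap ν u) := by
  obtain ⟨⟨_, ⟨lr, hlr, rfl⟩, σ, hsub, hrep⟩, hout⟩ := h
  refine ⟨⟨lr, hlr, fun x => cap ν (σ x), ?_, ?_⟩, ?_⟩
  · obtain ⟨w, hw⟩ := Option.isSome_iff_exists.1 hp
    rw [hw, cap_subAt hw hsub, cap_liftTm_subst]
  · rw [← cap_liftTm_subst]
    exact cap_replaceAt hrep hp
  · intro q hq hne s hs hred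
    obtain ⟨v, hv⟩ := Option.isSome_iff_exists.1
      (Tm.isSome_subAt_of_prefix (t := t) hq (by simp [hsub]))
    exact hout q hq hne v hv (isRedex_liftTRS_of_isRedex_cap hQ (cap_subAt hs hv ▸ hred))

theorem exists_alien_above {t : GroundTm F ar} {p : List ℕ} (hp : (cap ν t).subAt p = none)
    (ht : (t.subAt p).isSome) :
    ∃ q r x, p = q ++ 0 :: r ∧ (cap ν t).subAt q = some (.var x) := by
  induction p generalizing t with
  | nil => simp at hp
  | cons i p ih =>
    rcases t with ⟨⟨⟩⟩ | ⟨f | b, ts⟩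
    · obtain ⟨v, hv⟩ := Option.isSome_iff_exists.1 ht
      obtain ⟨hi, hv⟩ := Tm.subAt_cons_eq_some.1 hv
      obtain ⟨q, r, x, rfl, hq⟩ :=
        ih (Tm.subAt_cons_eq_none.1 hp hi) (Option.isSome_iff_exists.2 ⟨v, hv⟩)
      exact ⟨i :: q, r, x, rfl, Tm.subAt_cons_eq_some.2 ⟨hi, hq⟩⟩
    · obtain ⟨v, hv⟩ := Option.isSome_iff_exists.1 ht
      obtain ⟨hi, -⟩ := Tm.subAt_cons_eq_some.1 hv
      obtain rfl : i = 0 := by cases b <;> simp_all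
      exact ⟨[], p, _, rfl, rfl⟩

theorem cap_replaceAt_of_subAt_eq_none {z : V} {t v u : GroundTm F ar} {p : List ℕ}
    (h : t.replaceAt p v = some u) (hp : (cap (fun _ => z) t).subAt p = none) :
    cap (fun _ => z) u = cap (fun _ => z) t := by
  induction p generalizing t u with
  | nil => simp at hp
  | cons i p ih =>
    rcases t with ⟨⟨⟩⟩ | ⟨f | b, ts⟩
    · obtain ⟨hi, u', hu', rfl⟩ := Tm.replaceAt_cons_eq_some.1 h
      have hcap := ih hu' (Tm.subAt_cons_eq_none.1 hp hi)
      refine congrArg (Tm.app f)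
        ((funext (Function.apply_update (fun _ => cap _) ts _ u')).trans ?_)
      rw [hcap, Function.update_eq_self]
      rfl
    · obtain ⟨_, _, _, rfl⟩ := Tm.replaceAt_cons_eq_some.1 h
      rfl

end Cap

def alienDepth : GroundTm F ar → ℕ
  | .var x => x.elim
  | .app (.inl _) ts => Finset.univ.sup fun i => alienDepth (ts i)
  | .app (.inr _) ts => (Finset.univ.sup fun i => alienDepth (ts i)) + 1

theorem alienDepth_le_app {f : F ⊕ Bool} (ts : Fin (arExt ar f) → GroundTm F ar)
    (i : Fin (arExt ar f)) : alienDepth (ts i) ≤ alienDepth (.app f ts) := by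
  have := Finset.le_sup (f := fun i => alienDepth (ts i)) (Finset.mem_univ i)
  cases f <;> simp only [alienDepth] <;> omega

theorem alienDepth_lt_app_inr {b : Bool} (ts : Fin (arExt ar (.inr b)) → GroundTm F ar)
    (i : Fin (arExt ar (.inr b))) : alienDepth (ts i) < alienDepth (.app (.inr b) ts) :=
  Nat.lt_succ_of_le (Finset.le_sup (f := fun i => alienDepth (ts i)) (Finset.mem_univ i))

theorem alienDepth_app_mono {f : F ⊕ Bool} {ts ts' : Fin (arExt ar f) → GroundTm F ar}
    (h : ∀ i, alienDepth (ts i) ≤ alienDepth (ts' i)) :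
    alienDepth (.app f ts) ≤ alienDepth (.app f ts') := by
  have := Finset.sup_mono_fun (s := Finset.univ) fun i _ => h i
  cases f <;> simp only [alienDepth] <;> omega

theorem alienDepth_le_of_subAt {t v : GroundTm F ar} {p : List ℕ} (h : t.subAt p = some v) :
    alienDepth v ≤ alienDepth t := by
  induction p generalizing t with
  | nil => simp_all
  | cons i p ih =>
    rcases t with ⟨⟨⟩⟩ | ⟨f, ts⟩
    obtain ⟨_, h⟩ := Tm.subAt_cons_eq_some.1 h
    exact (ih h).trans (alienDepth_le_app ts _)

/-- Positions that `cap` hides lie strictly inside an alien. -/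
theorem alienDepth_lt_of_cap_subAt_eq_none {ν : GroundTm F ar → V} {t v : GroundTm F ar}
    {p : List ℕ} (hp : (cap ν t).subAt p = none) (hv : t.subAt p = some v) :
    alienDepth v < alienDepth t := by
  induction p generalizing t with
  | nil => simp at hp
  | cons i p ih =>
    rcases t with ⟨⟨⟩⟩ | ⟨f | b, ts⟩
    · obtain ⟨hi, hv⟩ := Tm.subAt_cons_eq_some.1 hv
      exact (ih (Tm.subAt_cons_eq_none.1 hp hi) hv).trans_le (alienDepth_le_app ts _)
    · obtain ⟨_, hv⟩ := Tm.subAt_cons_eq_some.1 hv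
      exact (alienDepth_le_of_subAt hv).trans_lt (alienDepth_lt_app_inr ts _)

theorem alienDepth_replaceAt_le {t v v' u : GroundTm F ar} {p : List ℕ}
    (hv : t.subAt p = some v) (h : t.replaceAt p v' = some u)
    (hle : alienDepth v' ≤ alienDepth v) : alienDepth u ≤ alienDepth t := by
  induction p generalizing t u with
  | nil => simp_all
  | cons i p ih =>
    rcases t with ⟨⟨⟩⟩ | ⟨f, ts⟩
    obtain ⟨hi, u', hu', rfl⟩ := Tm.replaceAt_cons_eq_some.1 h
    obtain ⟨_, hv⟩ := Tm.subAt_cons_eq_some.1 hv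
    refine alienDepth_app_mono fun j => ?_
    rw [Function.update_apply]
    split_ifs with hj
    · subst hj
      exact ih hv hu'
    · rfl

theorem alienDepth_liftTm_subst_le {l : Tm F ar V} {σ : V → GroundTm F ar} {B : ℕ}
    (h : ∀ x, l.occurs x → alienDepth (σ x) ≤ B) : alienDepth ((liftTm l).subst σ) ≤ B := by
  induction l with
  | var x => exact h x rfl
  | app f ts ih => exact Finset.sup_le fun i _ => ih i fun x hx => h x ⟨i, hx⟩

theorem le_alienDepth_liftTm_subst {l : Tm F ar V} {σ : V → GroundTm F ar} {x : V}
    (h : l.occurs x) : alienDepth (σ x) ≤ alienDepth ((liftTm l).subst σ) := by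
  induction l with
  | var y => exact h ▸ le_rfl
  | app f ts ih =>
    obtain ⟨i, hi⟩ := h
    exact (ih i hi).trans (alienDepth_le_app (f := .inl f) (fun j => (liftTm (ts j)).subst σ) i)

/-- Rules neither contain `s`, `0` nor introduce variables, so they cannot deepen aliens. -/
theorem alienDepth_le_of_rewAt {R : Set (Rule F ar V)} (hR : IsTRS R) {p : List ℕ}
    {t u : GroundTm F ar} (h : RewAt (liftTRS R) p t u) : alienDepth u ≤ alienDepth t := by
  obtain ⟨_, ⟨lr, hlr, rfl⟩, σ, hsub, hrep⟩ := h
  exact alienDepth_replaceAt_le hsub hrep (alienDepth_liftTm_subst_le fun x hx =>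
    le_alienDepth_liftTm_subst ((hR lr hlr).2 x hx))

theorem alienDepth_antitone {R : Set (Rule F ar V)} (hR : IsTRS R) {g : ℕ → GroundTm F ar}
    (hg : ∀ n, OStep (liftTRS R) (g n) (g (n + 1))) : Antitone fun n => alienDepth (g n) :=
  antitone_nat_of_succ_le fun n =>
    let ⟨_, hstep, _⟩ := hg n
    alienDepth_le_of_rewAt hR hstep

variable {R : Set (Rule F ar V)}

theorem exists_open_chain_of_frequently_visible [DecidableEq V] (hQ : QuasiLeftLinear R) {z : V}
    {g : ℕ → GroundTm F ar} {p : ℕ → List ℕ}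
    (hp : ∀ n, OutAt (liftTRS R) (p n) (g n) (g (n + 1)))
    (hvis : ∃ᶠ n in atTop, ((cap (fun _ => z) (g n)).subAt (p n)).isSome) :
    ∃ h : ℕ → Tm F ar V, ∀ n, OStep R (h n) (h (n + 1)) := by
  have hstay : ∀ n, ¬ ((cap (fun _ => z) (g n)).subAt (p n)).isSome →
      cap (fun _ => z) (g (n + 1)) = cap (fun _ => z) (g n) := fun n hn => by
    obtain ⟨_, _, _, _, hrep⟩ := (hp n).1
    exact cap_replaceAt_of_subAt_eq_none hrep (by simpa using hn)
  obtain ⟨e, he⟩ := exists_enum_of_frequently (f := fun n => cap (fun _ => z) (g n)) hvis hstay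
  exact ⟨fun k => cap _ (g (e k)), fun k => ⟨p (e k), (he k).2 ▸ outAt_cap hQ (hp (e k)) (he k).1⟩⟩

theorem exists_alien_frequently_rewritten {z : V} {g : ℕ → GroundTm F ar} {p : ℕ → List ℕ}
    (hp : ∀ n, OutAt (liftTRS R) (p n) (g n) (g (n + 1)))
    (hinv : ∀ n, (cap (fun _ => z) (g n)).subAt (p n) = none) :
    ∃ q, (∀ n, (cap (fun _ => z) (g n)).subAt q = none) ∧ (∃ᶠ n in atTop, q <+: p n) ∧
      ∀ n, ¬ q <+: p n → (g (n + 1)).subAt q = (g n).subAt q := by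
  set c := cap (fun _ => z) (g 0)
  have hc : ∀ n, cap (fun _ => z) (g n) = c := by
    intro n
    induction n with
    | zero => rfl
    | succ n ih =>
      obtain ⟨_, _, _, _, hrep⟩ := (hp n).1
      rw [cap_replaceAt_of_subAt_eq_none hrep (hinv n), ih]
  have halien : ∀ n, ∃ q r x, p n = q ++ 0 :: r ∧ c.subAt q = some (.var x) := fun n => by
    rw [← hc n]
    exact exists_alien_above (hinv n) (hp n).1.isSome_subAt
  choose q r x hpq hq using halien
  have hZ : {q | ∃ y, c.subAt q = some (.var y)}.Finite :=
    c.finite_setOf_isSome_subAt.subset fun q ⟨y, hy⟩ => by simp [hy]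
  obtain ⟨qs, ⟨y, hqs⟩, hfreq⟩ := (hZ.frequently_exists (l := atTop) (p := fun qs n => q n = qs)).1
    (Frequently.of_forall fun n => ⟨q n, ⟨x n, hq n⟩, rfl⟩)
  have hbelow : ∀ n, q n = qs → qs ++ [0] <+: p n := fun n hn => ⟨r n, by rw [hpq, hn]; simp⟩
  refine ⟨qs ++ [0], fun n => by rw [hc, Tm.subAt_append, hqs]; rfl, hfreq.mono hbelow,
    fun n hn => ?_⟩
  obtain ⟨_, _, _, _, hrep⟩ := (hp n).1
  refine Tm.subAt_replaceAt_of_not_prefix hrep (fun h => hn (hbelow n ?_)) hn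
  exact Tm.eq_of_subAt_eq_var_of_prefix (hq n) hqs ((hpq n ▸ List.prefix_append _ _).trans h)
    (List.prefix_append _ _)

theorem exists_open_chain_of_ground_chain [DecidableEq V] [Nonempty V] (hR : IsTRS R)
    (hQ : QuasiLeftLinear R) {g : ℕ → GroundTm F ar}
    (hg : ∀ n, OStep (liftTRS R) (g n) (g (n + 1))) :
    ∃ h : ℕ → Tm F ar V, ∀ n, OStep R (h n) (h (n + 1)) := by
  obtain ⟨z⟩ := ‹Nonempty V›
  induction hD : alienDepth (g 0) using Nat.strong_induction_on generalizing g with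
  | _ D ih =>
  choose p hp using hg
  by_cases hvis : ∃ᶠ n in atTop, ((cap (fun _ => z) (g n)).subAt (p n)).isSome
  · exact exists_open_chain_of_frequently_visible hQ hp hvis
  · obtain ⟨N, hN⟩ := eventually_atTop.1 (not_frequently.1 hvis)
    obtain ⟨q, hq, hbelow, hstay⟩ := exists_alien_frequently_rewritten (g := fun n => g (N + n))
      (fun n => hp (N + n)) fun n => by simpa using hN (N + n) (Nat.le_add_right N n)
    obtain ⟨g', hg', m, hm⟩ := exists_chain_of_frequently_below (fun n => hp (N + n)) hbelow hstay
    have hdepth : alienDepth (g' 0) < D := hD ▸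
      (alienDepth_lt_of_cap_subAt_eq_none (hq m) hm).trans_le
        (alienDepth_antitone hR (fun n => ⟨p n, hp n⟩) (Nat.zero_le _))
    exact ih _ hdepth hg' rfl

theorem outermost_ground_vs_open_general {F : Type} {ar : F → ℕ} {V : Type}
    [DecidableEq V] [Countable V] [Infinite V]
    (R : Set (Rule F ar V)) (hTRS : IsTRS R) :
    ((¬ ∃ g : ℕ → TRSStmt.Tm (F ⊕ Bool) (arExt ar) Empty,
        ∀ n, OStep (liftTRS R) (g n) (g (n + 1))) →
      (¬ ∃ g : ℕ → TRSStmt.Tm F ar V, ∀ n, OStep R (g n) (g (n + 1)))) ∧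
    (QuasiLeftLinear R →
      (¬ ∃ g : ℕ → TRSStmt.Tm F ar V, ∀ n, OStep R (g n) (g (n + 1))) →
      (¬ ∃ g : ℕ → TRSStmt.Tm (F ⊕ Bool) (arExt ar) Empty,
        ∀ n, OStep (liftTRS R) (g n) (g (n + 1)))) :=
  ⟨fun hground ⟨_, hg⟩ => hground (exists_ground_chain_of_open_chain hg),
    fun hQ hopen ⟨_, hg⟩ => hopen (exists_open_chain_of_ground_chain hTRS hQ hg)⟩

/-- Lemma 5.15: `R` is outermost terminating (on open terms over `Σ`)
    if `R` over `Σ ∪ {s, 0}` is outermost ground terminating; for quasi-left-linear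
    `R` the converse holds as well. -/
theorem outermost_ground_vs_open {F : Type} {ar : F → ℕ} {V : Type}
    [DecidableEq V] [Countable V] [Infinite V]
    (R : Set (Rule F ar V)) (hTRS : IsTRS R) (hfin : R.Finite) :
    ((¬ ∃ g : ℕ → TRSStmt.Tm (F ⊕ Bool) (arExt ar) Empty,
        ∀ n, OStep (liftTRS R) (g n) (g (n + 1))) →
      (¬ ∃ g : ℕ → TRSStmt.Tm F ar V, ∀ n, OStep R (g n) (g (n + 1)))) ∧
    (QuasiLeftLinear R →
      (¬ ∃ g : ℕ → TRSStmt.Tm F ar V, ∀ n, OStep R (g n) (g (n + 1))) →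
      (¬ ∃ g : ℕ → TRSStmt.Tm (F ⊕ Bool) (arExt ar) Empty,
        ∀ n, OStep (liftTRS R) (g n) (g (n + 1)))) :=
  outermost_ground_vs_open_general R hTRS

end Stmt
end
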